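/- arXiv:1012.4424 — 12 statements merged into one kernel-verified Lean document; each statement's English description precedes it below -/
import Mathlib

section
/- Let 𝒳 be a subset of the roots of unity in ℂ and ω ∈ ℂ a nonzero complex number such that for every x ∈ 𝒳, ω + x is also a root of unity. Then 𝒳 has at most 2 elements, and if 𝒳 = {α, β} with α ≠ β, then ω = -α - β. -/
lemma aux_mul_conj_eq_one (z : ℂ) (n : ℕ) (hn : 1 ≤ n) (h : z ^ n = 1) :
    z * (starRingEnd ℂ) z = 1 := by
  have habs : ‖z‖ ^ n = 1 := by
    rw [← norm_pow, h, norm_one]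
  have h1 : ‖z‖ = 1 := by
    rcases pow_eq_one_iff_cases.mp habs with h | h | h
    · omega
    · exact h
    · have := norm_nonneg z; linarith [h.1]
  rw [Complex.mul_conj]
  norm_cast
  rw [Complex.normSq_eq_norm_sq, h1]; norm_num

theorem stmt_0 (X : Set ℂ) (ω : ℂ) (hω : ω ≠ 0)
    (hX : ∀ x ∈ X, ∃ n : ℕ, 1 ≤ n ∧ x ^ n = 1)
    (hωX : ∀ x ∈ X, ∃ n : ℕ, 1 ≤ n ∧ (ω + x) ^ n = 1) :
    (∃ a b : ℂ, X ⊆ {a, b}) ∧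
      ∀ α ∈ X, ∀ β ∈ X, α ≠ β → ω = -α - β := by
  have hconj : (starRingEnd ℂ) ω ≠ 0 := by
    simpa using hω
  have quad : ∀ x ∈ X,
      (starRingEnd ℂ) ω * x ^ 2 + ω * (starRingEnd ℂ) ω * x + ω = 0 := by
    intro x hx
    obtain ⟨n, hn, hxn⟩ := hX x hx
    obtain ⟨m, hm, hxm⟩ := hωX x hx
    have h1 := aux_mul_conj_eq_one x n hn hxn
    have h2 := aux_mul_conj_eq_one (ω + x) m hm hxm
    rw [map_add] at h2
    linear_combination x * h2 - (ω + x) * h1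
  have key : ∀ x ∈ X, ∀ y ∈ X, x ≠ y → x + y = -ω := by
    intro x hx y hy hne
    have h : (starRingEnd ℂ) ω * ((x - y) * (x + y + ω)) = 0 := by
      linear_combination quad x hx - quad y hy
    rcases mul_eq_zero.mp h with h | h
    · exact absurd h hconj
    rcases mul_eq_zero.mp h with h | h
    · exact absurd (sub_eq_zero.mp h) hne
    · linear_combination h
  constructor
  · rcases Set.eq_empty_or_nonempty X with h | ⟨a, ha⟩
    · exact ⟨0, 0, by simp [h]⟩
    · refine ⟨a, -ω - a, fun x hx => ?_⟩
      by_cases hxa : x = a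
      · exact Or.inl hxa
      · have := key x hx a ha hxa
        right
        simp only [Set.mem_singleton_iff]
        linear_combination this
  · intro α hα β hβ hne
    have := key α hα β hβ hne
    linear_combination this
end

section
/- Let k be a field of characteristic 0, n ≥ 1, ζ ∈ k a primitive n-th root of unity, and A = k[X]/(X^n - 1). A polynomial class P ∈ A generates A as a unital k-algebra if and only if for all r, s ∈ {0, ..., n-1} with r ≠ s, one has P(ζ^r) ≠ P(ζ^s). -/
open Polynomial

theorem stmt_2 (k : Type*) [Field k] [CharZero k] (n : ℕ) (hn : 1 ≤ n)
    (ζ : k) (hζ : IsPrimitiveRoot ζ n) (P : k[X]) :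
    Algebra.adjoin k {Ideal.Quotient.mk (Ideal.span {(X : k[X]) ^ n - 1}) P} = ⊤ ↔
      ∀ r s : ℕ, r < n → s < n → r ≠ s → P.eval (ζ ^ r) ≠ P.eval (ζ ^ s) := by
  set I : Ideal k[X] := Ideal.span {(X : k[X]) ^ n - 1} with hI
  -- evaluation maps out of the quotient
  have hroot : ∀ r : ℕ, ∀ p ∈ I, (aeval (ζ ^ r)) p = 0 := by
    intro r p hp
    rw [hI, Ideal.mem_span_singleton] at hp
    obtain ⟨c, rfl⟩ := hp
    have : (ζ ^ r) ^ n = 1 := by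
      rw [← pow_mul, mul_comm, pow_mul, hζ.pow_eq_one, one_pow]
    simp [this]
  let ev : ℕ → (k[X] ⧸ I) →ₐ[k] k := fun r =>
    Ideal.Quotient.liftₐ I (aeval (ζ ^ r)) (hroot r)
  have hev : ∀ r (Q : k[X]), ev r (Ideal.Quotient.mk I Q) = Q.eval (ζ ^ r) := by
    intro r Q
    simp [ev, Ideal.Quotient.liftₐ_apply, Ideal.Quotient.lift_mk, aeval_def]
  constructor
  · intro htop r s hr hs hrs heq
    have hext : ev r = ev s := by
      apply AlgHom.ext_of_adjoin_eq_top htop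
      rintro x rfl
      rw [hev, hev, heq]
    have : ζ ^ r = ζ ^ s := by
      have := congrArg (fun f => f (Ideal.Quotient.mk I X)) hext
      simpa [hev] using this
    exact hrs (hζ.pow_inj hr hs this)
  · intro h
    rw [eq_top_iff]
    rintro x -
    obtain ⟨Q, rfl⟩ := Ideal.Quotient.mk_surjective x
    rw [Algebra.adjoin_singleton_eq_range_aeval, AlgHom.mem_range]
    -- interpolation polynomial
    have hinj : Set.InjOn (fun i : ℕ => P.eval (ζ ^ i)) ↑(Finset.range n) := by
      intro a ha b hb hab
      simp only [Finset.coe_range, Set.mem_Iio] at ha hb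
      by_contra hne
      exact h a b ha hb hne hab
    set R : k[X] := Lagrange.interpolate (Finset.range n)
      (fun i : ℕ => P.eval (ζ ^ i)) (fun i : ℕ => Q.eval (ζ ^ i)) with hR
    refine ⟨R, ?_⟩
    have key : Ideal.Quotient.mk I (R.comp P) = Ideal.Quotient.mk I Q := by
      rw [Ideal.Quotient.eq, hI, Ideal.mem_span_singleton]
      have hprod : (X : k[X]) ^ n - 1 = ∏ i ∈ Finset.range n, (X - C (ζ ^ i)) := by
        have := X_pow_sub_C_eq_prod hζ hn (one_pow n : (1 : k) ^ n = 1)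
        simpa using this
      rw [hprod]
      apply Finset.prod_dvd_of_coprime
      · intro a ha b hb hab
        refine isCoprime_X_sub_C_of_isUnit_sub ?_
        refine (sub_ne_zero_of_ne ?_).isUnit
        simp only [Finset.coe_range, Set.mem_Iio] at ha hb
        exact fun hc => hab (hζ.pow_inj ha hb hc)
      · intro i hi
        rw [dvd_iff_isRoot]
        have : (R.comp P).eval (ζ ^ i) = Q.eval (ζ ^ i) := by
          rw [eval_comp, hR, Lagrange.eval_interpolate_at_node _ hinj hi]
        simp [IsRoot, this]
    calc (aeval (Ideal.Quotient.mk I P)) R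
        = Ideal.Quotient.mk I (R.comp P) := by
          rw [comp_eq_aeval]
          have := (Polynomial.aeval_algHom_apply (Ideal.Quotient.mkₐ k I) P R)
          simpa [Ideal.Quotient.mkₐ_eq_mk] using this
      _ = Ideal.Quotient.mk I Q := key
end

section
/- Let k be a field of characteristic 0, ζ ∈ k a primitive n-th root of unity, and consider the algebra A ⊗ A = k[X,Y]/(X^n - 1, Y^n - 1). For P ∈ k[X]/(X^n - 1), the unital subalgebra of A ⊗ A generated by P(X) + P(Y) contains X + Y if and only if for all i, j, k, l ∈ {0,...,n-1}, ζ^i + ζ^j ≠ ζ^k + ζ^l implies P(ζ^i) + P(ζ^j) ≠ P(ζ^k) + P(ζ^l). -/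
open MvPolynomial

set_option maxHeartbeats 1000000 in
theorem stmt_3 (k : Type*) [Field k] [CharZero k] (n : ℕ) (hn : 1 ≤ n)
    (ζ : k) (hζ : IsPrimitiveRoot ζ n) (P : Polynomial k) :
    Ideal.Quotient.mk
        (Ideal.span {(X 0 : MvPolynomial (Fin 2) k) ^ n - 1, (X 1 : MvPolynomial (Fin 2) k) ^ n - 1})
        (X 0 + X 1) ∈
      Algebra.adjoin k
        {Ideal.Quotient.mk
          (Ideal.span {(X 0 : MvPolynomial (Fin 2) k) ^ n - 1, (X 1 : MvPolynomial (Fin 2) k) ^ n - 1})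
          (Polynomial.aeval (X 0 : MvPolynomial (Fin 2) k) P +
            Polynomial.aeval (X 1 : MvPolynomial (Fin 2) k) P)} ↔
      ∀ i j l m : ℕ, i < n → j < n → l < n → m < n →
        ζ ^ i + ζ ^ j ≠ ζ ^ l + ζ ^ m →
        P.eval (ζ ^ i) + P.eval (ζ ^ j) ≠ P.eval (ζ ^ l) + P.eval (ζ ^ m) := by
  classical
  set I : Ideal (MvPolynomial (Fin 2) k) :=
    Ideal.span {(X 0 : MvPolynomial (Fin 2) k) ^ n - 1,
      (X 1 : MvPolynomial (Fin 2) k) ^ n - 1} with hIdef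
  set pt : Fin n × Fin n → Fin 2 → k := fun p => ![ζ ^ (p.1 : ℕ), ζ ^ (p.2 : ℕ)] with hptdef
  set Φ : MvPolynomial (Fin 2) k →ₐ[k] (Fin n × Fin n → k) :=
    Pi.algHom k _ (fun p => MvPolynomial.aeval (pt p)) with hΦdef
  have hΦapp : ∀ (g : MvPolynomial (Fin 2) k) (p), Φ g p = MvPolynomial.aeval (pt p) g :=
    fun g p => rfl
  -- powers of ζ are n-th roots of unity
  have hroot : ∀ a : ℕ, (ζ ^ a) ^ n = 1 := by
    intro a
    rw [← pow_mul, mul_comm, pow_mul, hζ.pow_eq_one, one_pow]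
  -- the ideal is killed by Φ
  have hker : ∀ a ∈ I, Φ a = 0 := by
    intro a ha
    have hle : I ≤ RingHom.ker Φ.toRingHom := by
      rw [hIdef, Ideal.span_le]
      rintro g hg
      rcases hg with rfl | hg
      · show Φ _ = 0
        funext p
        rw [hΦapp]
        simp [hptdef, hroot]
      · rcases hg with rfl
        show Φ _ = 0
        funext p
        rw [hΦapp]
        simp [hptdef, hroot]
    exact hle ha
  set Φq : (MvPolynomial (Fin 2) k ⧸ I) →ₐ[k] (Fin n × Fin n → k) :=
    Ideal.Quotient.liftₐ I Φ hker with hΦqdef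
  have hΦq : ∀ g, Φq (Ideal.Quotient.mk I g) = Φ g := by
    intro g
    rw [hΦqdef, Ideal.Quotient.liftₐ_apply]
    rfl
  -- key computation : evaluating an image of a one-variable polynomial
  have hkey : ∀ (p : Fin n × Fin n) (B : Polynomial k) (t : Fin 2),
      MvPolynomial.aeval (pt p) (Polynomial.aeval (X t : MvPolynomial (Fin 2) k) B)
        = B.eval (pt p t) := by
    intro p B t
    rw [← Polynomial.aeval_algHom_apply, MvPolynomial.aeval_X, ← Polynomial.coe_aeval_eq_eval]
  -- injectivity of nodes
  have hnodes : Set.InjOn (fun i : Fin n => ζ ^ (i : ℕ)) ↑(Finset.univ : Finset (Fin n)) := by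
    intro i _ j _ h
    exact Fin.ext (hζ.pow_inj i.is_lt j.is_lt h)
  -- surjectivity of Φ
  have hsurj : Function.Surjective Φ := by
    intro w
    set B : Fin n → Polynomial k :=
      fun i => Lagrange.basis Finset.univ (fun i : Fin n => ζ ^ (i : ℕ)) i with hBdef
    refine ⟨∑ p : Fin n × Fin n, C (w p) *
      (Polynomial.aeval (X 0 : MvPolynomial (Fin 2) k) (B p.1) *
        Polynomial.aeval (X 1 : MvPolynomial (Fin 2) k) (B p.2)), ?_⟩
    funext q
    rw [map_sum, Finset.sum_apply]
    have hterm : ∀ p : Fin n × Fin n,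
        Φ (C (w p) * (Polynomial.aeval (X 0 : MvPolynomial (Fin 2) k) (B p.1) *
          Polynomial.aeval (X 1 : MvPolynomial (Fin 2) k) (B p.2))) q
        = w p * ((B p.1).eval (ζ ^ (q.1 : ℕ)) * (B p.2).eval (ζ ^ (q.2 : ℕ))) := by
      intro p
      rw [hΦapp, map_mul, map_mul, hkey, hkey, MvPolynomial.aeval_C]
      simp [hptdef]
    rw [Finset.sum_congr rfl (fun p _ => hterm p)]
    rw [Finset.sum_eq_single_of_mem q (Finset.mem_univ q)]
    · have h1 : (B q.1).eval (ζ ^ (q.1 : ℕ)) = 1 :=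
        Lagrange.eval_basis_self hnodes (Finset.mem_univ q.1)
      have h2 : (B q.2).eval (ζ ^ (q.2 : ℕ)) = 1 :=
        Lagrange.eval_basis_self hnodes (Finset.mem_univ q.2)
      rw [h1, h2]
      ring
    · intro p _ hpq
      rcases (show p.1 ≠ q.1 ∨ p.2 ≠ q.2 by
        by_contra h
        push_neg at h
        exact hpq (Prod.ext h.1 h.2)) with h | h
      · have h0 : (B p.1).eval (ζ ^ (q.1 : ℕ)) = 0 :=
          Lagrange.eval_basis_of_ne (v := fun i : Fin n => ζ ^ (i : ℕ)) h (Finset.mem_univ q.1)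
        rw [h0]
        ring
      · have h0 : (B p.2).eval (ζ ^ (q.2 : ℕ)) = 0 :=
          Lagrange.eval_basis_of_ne (v := fun i : Fin n => ζ ^ (i : ℕ)) h (Finset.mem_univ q.2)
        rw [h0]
        ring
  have hsurjq : Function.Surjective Φq := by
    intro w
    obtain ⟨g, hg⟩ := hsurj w
    exact ⟨Ideal.Quotient.mk I g, by rw [hΦq, hg]⟩
  -- monomial spanning set of the quotient
  set msP : Fin n × Fin n → (MvPolynomial (Fin 2) k ⧸ I) :=
    fun p => (Ideal.Quotient.mk I (X 0)) ^ (p.1 : ℕ) * (Ideal.Quotient.mk I (X 1)) ^ (p.2 : ℕ)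
    with hmsPdef
  have hx : ∀ t : Fin 2, (Ideal.Quotient.mk I (X t : MvPolynomial (Fin 2) k)) ^ n = 1 := by
    intro t
    rw [← map_pow, show (1 : MvPolynomial (Fin 2) k ⧸ I) = Ideal.Quotient.mk I 1 from rfl,
      Ideal.Quotient.mk_eq_mk_iff_sub_mem]
    fin_cases t
    · exact Ideal.subset_span (Or.inl rfl)
    · exact Ideal.subset_span (Or.inr rfl)
  have hpow : ∀ (z : MvPolynomial (Fin 2) k ⧸ I), z ^ n = 1 → ∀ m : ℕ, z ^ m = z ^ (m % n) := by
    intro z hz m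
    conv_lhs => rw [← Nat.div_add_mod m n]
    rw [pow_add, pow_mul, hz, one_pow, one_mul]
  have hspan : Submodule.span k (Set.range msP) = ⊤ := by
    rw [Submodule.eq_top_iff']
    intro z
    obtain ⟨g, rfl⟩ := Ideal.Quotient.mk_surjective z
    induction g using MvPolynomial.induction_on with
    | C a =>
        have h1 : Ideal.Quotient.mk I (MvPolynomial.C a) = a • msP (⟨0, hn⟩, ⟨0, hn⟩) := by
          rw [hmsPdef]
          simp only [Fin.val_mk, pow_zero, mul_one]
          rw [show (MvPolynomial.C a : MvPolynomial (Fin 2) k) = algebraMap k _ a from rfl,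
            Ideal.Quotient.mk_algebraMap, Algebra.algebraMap_eq_smul_one]
        rw [h1]
        exact Submodule.smul_mem _ _ (Submodule.subset_span ⟨_, rfl⟩)
    | add g₁ g₂ hg₁ hg₂ =>
        rw [RingHom.map_add]
        exact Submodule.add_mem _ hg₁ hg₂
    | mul_X g t hg =>
        rw [RingHom.map_mul]
        have key : ∀ z ∈ Submodule.span k (Set.range msP),
            z * Ideal.Quotient.mk I (X t) ∈ Submodule.span k (Set.range msP) := by
          intro z hz
          induction hz using Submodule.span_induction with
          | mem w hw =>
              obtain ⟨p, rfl⟩ := hw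
              have hlt1 : ((p.1 : ℕ) + 1) % n < n := Nat.mod_lt _ (by omega)
              have hlt2 : ((p.2 : ℕ) + 1) % n < n := Nat.mod_lt _ (by omega)
              fin_cases t
              · have heq : msP p * Ideal.Quotient.mk I (X 0)
                    = msP (⟨((p.1 : ℕ) + 1) % n, hlt1⟩, p.2) := by
                  rw [hmsPdef]
                  simp only [Fin.val_mk]
                  rw [← hpow _ (hx 0) ((p.1 : ℕ) + 1), pow_succ]
                  ring
                show msP p * Ideal.Quotient.mk I (X 0) ∈ Submodule.span k (Set.range msP)
                rw [heq]
                exact Submodule.subset_span ⟨_, rfl⟩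
              · have heq : msP p * Ideal.Quotient.mk I (X 1)
                    = msP (p.1, ⟨((p.2 : ℕ) + 1) % n, hlt2⟩) := by
                  rw [hmsPdef]
                  simp only [Fin.val_mk]
                  rw [← hpow _ (hx 1) ((p.2 : ℕ) + 1), pow_succ]
                  ring
                show msP p * Ideal.Quotient.mk I (X 1) ∈ Submodule.span k (Set.range msP)
                rw [heq]
                exact Submodule.subset_span ⟨_, rfl⟩
          | zero => rw [zero_mul]; exact Submodule.zero_mem _
          | add a b _ _ ha hb => rw [add_mul]; exact Submodule.add_mem _ ha hb
          | smul c a _ ha => rw [smul_mul_assoc]; exact Submodule.smul_mem _ _ ha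
        exact key _ hg
  -- finite dimensionality and injectivity
  haveI hfin : Module.Finite k (MvPolynomial (Fin 2) k ⧸ I) := by
    refine ⟨⟨Finset.image msP Finset.univ, ?_⟩⟩
    rw [Finset.coe_image, Finset.coe_univ, Set.image_univ, hspan]
  have hdimle : Module.finrank k (MvPolynomial (Fin 2) k ⧸ I) ≤ n * n := by
    have h1 := finrank_span_finset_le_card (R := k) (Finset.image msP Finset.univ)
    rw [Set.finrank] at h1
    rw [Finset.coe_image, Finset.coe_univ, Set.image_univ, hspan, finrank_top] at h1
    refine h1.trans ?_
    refine (Finset.card_image_le).trans ?_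
    rw [Finset.card_univ, Fintype.card_prod, Fintype.card_fin]
  have hdimcod : Module.finrank k (Fin n × Fin n → k) = n * n := by
    rw [Module.finrank_fintype_fun_eq_card, Fintype.card_prod, Fintype.card_fin]
  have hinjq : Function.Injective Φq := by
    have hrange : LinearMap.range Φq.toLinearMap = ⊤ := by
      rw [LinearMap.range_eq_top]
      have : ⇑Φq.toLinearMap = ⇑Φq := funext fun z => AlgHom.toLinearMap_apply Φq z
      rw [this]
      exact hsurjq
    have hrn := LinearMap.finrank_range_add_finrank_ker (Φq.toLinearMap)
    rw [hrange, finrank_top, hdimcod] at hrn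
    have h0 : Module.finrank k (LinearMap.ker Φq.toLinearMap) = 0 := by omega
    have hbot : LinearMap.ker Φq.toLinearMap = ⊥ := Submodule.finrank_eq_zero.mp h0
    have h := LinearMap.ker_eq_bot.mp hbot
    have hc : ⇑Φq.toLinearMap = ⇑Φq := funext fun z => AlgHom.toLinearMap_apply Φq z
    rwa [hc] at h
  set f : MvPolynomial (Fin 2) k :=
    Polynomial.aeval (X 0 : MvPolynomial (Fin 2) k) P +
      Polynomial.aeval (X 1 : MvPolynomial (Fin 2) k) P with hfdef
  have hΦf : ∀ p : Fin n × Fin n,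
      Φ f p = P.eval (ζ ^ (p.1 : ℕ)) + P.eval (ζ ^ (p.2 : ℕ)) := by
    intro p
    rw [hΦapp, hfdef, map_add, hkey, hkey]
    simp [hptdef]
  have hΦxy : ∀ p : Fin n × Fin n,
      Φ ((X 0 : MvPolynomial (Fin 2) k) + X 1) p = ζ ^ (p.1 : ℕ) + ζ ^ (p.2 : ℕ) := by
    intro p
    rw [hΦapp, map_add, MvPolynomial.aeval_X, MvPolynomial.aeval_X]
    simp [hptdef]
  have hevalpt : ∀ (Qp : Polynomial k) (w : Fin n × Fin n → k) (p : Fin n × Fin n),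
      (Polynomial.aeval w Qp) p = Polynomial.aeval (w p) Qp :=
    fun Qp w p => (Polynomial.aeval_algHom_apply (Pi.evalAlgHom k (fun _ => k) p) w Qp).symm
  constructor
  · intro hmem i j l m hi hj hl hm hne heq
    rw [Algebra.adjoin_singleton_eq_range_aeval, AlgHom.mem_range] at hmem
    obtain ⟨Qp, hQp⟩ := hmem
    have hpoint : ∀ p : Fin n × Fin n,
        Polynomial.aeval (P.eval (ζ ^ (p.1 : ℕ)) + P.eval (ζ ^ (p.2 : ℕ))) Qp
          = ζ ^ (p.1 : ℕ) + ζ ^ (p.2 : ℕ) := by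
      intro p
      have h1 := congrArg Φq hQp
      rw [← Polynomial.aeval_algHom_apply] at h1
      have h2 := congrFun h1 p
      rw [hevalpt] at h2
      rw [hΦq, hΦq, hΦf p, hΦxy p] at h2
      exact h2
    have ha := hpoint (⟨i, hi⟩, ⟨j, hj⟩)
    have hb := hpoint (⟨l, hl⟩, ⟨m, hm⟩)
    simp only [Fin.val_mk] at ha hb
    rw [heq] at ha
    exact hne (ha.symm.trans hb)
  · intro hcond
    rw [Algebra.adjoin_singleton_eq_range_aeval, AlgHom.mem_range]
    set pv : Fin n × Fin n → k := fun p => P.eval (ζ ^ (p.1 : ℕ)) + P.eval (ζ ^ (p.2 : ℕ))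
      with hpvdef
    set S : Finset k := Finset.image pv Finset.univ with hSdef
    set r : k → k := fun c =>
      if h : ∃ p : Fin n × Fin n, pv p = c
      then ζ ^ ((h.choose.1 : ℕ)) + ζ ^ ((h.choose.2 : ℕ)) else 0 with hrdef
    set Qp : Polynomial k := Lagrange.interpolate S id r with hQpdef
    have hQeval : ∀ p : Fin n × Fin n,
        Polynomial.eval (pv p) Qp = ζ ^ (p.1 : ℕ) + ζ ^ (p.2 : ℕ) := by
      intro p
      have hmem : pv p ∈ S := Finset.mem_image_of_mem pv (Finset.mem_univ p)
      have h1 : Polynomial.eval (id (pv p)) (Lagrange.interpolate S id r)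
          = r (pv p) := Lagrange.eval_interpolate_at_node r (Set.injOn_id _) hmem
      have hex : ∃ q : Fin n × Fin n, pv q = pv p := ⟨p, rfl⟩
      have h2 : r (pv p) = ζ ^ ((hex.choose.1 : ℕ)) + ζ ^ ((hex.choose.2 : ℕ)) :=
        dif_pos hex
      have hch : ζ ^ ((hex.choose.1 : ℕ)) + ζ ^ ((hex.choose.2 : ℕ))
          = ζ ^ (p.1 : ℕ) + ζ ^ (p.2 : ℕ) := by
        by_contra hne
        refine hcond _ _ _ _ hex.choose.1.is_lt hex.choose.2.is_lt p.1.is_lt p.2.is_lt hne ?_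
        exact hex.choose_spec
      rw [hQpdef]
      calc Polynomial.eval (pv p) (Lagrange.interpolate S id r)
          = r (pv p) := h1
        _ = _ := h2.trans hch
    refine ⟨Qp, ?_⟩
    apply hinjq
    rw [← Polynomial.aeval_algHom_apply]
    funext p
    rw [hevalpt, hΦq, hΦq, hΦf p, hΦxy p, ← Polynomial.coe_aeval_eq_eval]
    exact hQeval p
end

section
/- Let K be a finite Galois extension of ℚ and B a unital ℚ-subalgebra of K × K such that both projections p₁, p₂ : K × K → K restrict to surjections from B onto K. Then either B = K × K, or there exists σ in the Galois group Gal(K/ℚ) such that B = {(x, σ(x)) | x ∈ K}. -/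
theorem stmt_6 (K : Type*) [Field K] [Algebra ℚ K] [FiniteDimensional ℚ K] [IsGalois ℚ K]
    (B : Subalgebra ℚ (K × K))
    (h1 : ∀ x : K, ∃ b ∈ B, b.1 = x) (h2 : ∀ x : K, ∃ b ∈ B, b.2 = x) :
    B = ⊤ ∨ ∃ σ : K ≃ₐ[ℚ] K, (B : Set (K × K)) = {p : K × K | p.2 = σ p.1} := by
  by_cases hI : ∃ y : K, y ≠ 0 ∧ ((0 : K), y) ∈ B
  · left
    obtain ⟨y, hy0, hyB⟩ := hI
    -- {0} × K ⊆ B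
    have hcol : ∀ z : K, ((0 : K), z) ∈ B := by
      intro z
      obtain ⟨b, hbB, hb2⟩ := h2 (z * y⁻¹)
      have : ((0 : K), y) * b ∈ B := B.mul_mem hyB hbB
      have heq : ((0 : K), y) * b = ((0 : K), z) := by
        ext
        · simp
        · simp [hb2, mul_comm y]
          field_simp
      rwa [heq] at this
    have hrow : ∀ x : K, ((x : K), (0 : K)) ∈ B := by
      intro x
      obtain ⟨b, hbB, hb1⟩ := h1 x
      have : b - ((0 : K), b.2) ∈ B := B.sub_mem hbB (hcol b.2)
      have heq : b - ((0 : K), b.2) = (x, (0 : K)) := by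
        ext <;> simp [hb1]
      rwa [heq] at this
    rw [eq_top_iff]
    rintro ⟨x, z⟩ -
    have : ((x : K), (0 : K)) + ((0 : K), z) ∈ B := B.add_mem (hrow x) (hcol z)
    simpa using this
  · right
    push_neg at hI
    -- the first projection restricted to B
    set f : B →ₐ[ℚ] K := (AlgHom.fst ℚ K K).comp B.val with hf
    have hfinj : Function.Injective f := by
      intro a b hab
      have h0 : ((a : K × K) - b).1 = 0 := by
        have : (a : K × K).1 = (b : K × K).1 := hab
        simp [this]
      have hmem : ((0 : K), ((a : K × K) - b).2) ∈ B := by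
        have := B.sub_mem a.2 b.2
        have heq : (a : K × K) - b = ((0 : K), ((a : K × K) - b).2) := by
          ext
          · exact h0
          · rfl
        rwa [heq] at this
      have h2z : ((a : K × K) - b).2 = 0 := by
        by_contra hne
        exact hI _ hne hmem
      have : (a : K × K) = b := by
        have := sub_eq_zero.mp (Prod.ext h0 h2z)
        exact this
      exact Subtype.ext this
    have hfsurj : Function.Surjective f := by
      intro x
      obtain ⟨b, hbB, hb1⟩ := h1 x
      exact ⟨⟨b, hbB⟩, hb1⟩
    let e : B ≃ₐ[ℚ] K := AlgEquiv.ofBijective f ⟨hfinj, hfsurj⟩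
    let g : K →ₐ[ℚ] K := ((AlgHom.snd ℚ K K).comp B.val).comp (e.symm : K ≃ₐ[ℚ] B).toAlgHom
    let σ : K ≃ₐ[ℚ] K := AlgEquiv.ofBijective g g.bijective
    refine ⟨σ, ?_⟩
    ext p
    constructor
    · intro hp
      show p.2 = σ p.1
      have h1p : e ⟨p, hp⟩ = p.1 := rfl
      have : e.symm p.1 = ⟨p, hp⟩ := by rw [← h1p, e.symm_apply_apply]
      exact (show ((e.symm p.1 : K × K)).2 = p.2 by rw [this]).symm
    · intro hp
      have hp : p.2 = σ p.1 := hp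
      have hb : (e.symm p.1 : K × K) ∈ B := (e.symm p.1).2
      have h1' : ((e.symm p.1 : K × K)).1 = p.1 := by
        have := e.apply_symm_apply p.1
        exact this
      have h2' : ((e.symm p.1 : K × K)).2 = p.2 := by rw [hp]; rfl
      have : (e.symm p.1 : K × K) = p := Prod.ext h1' h2'
      rw [← this]
      exact hb
end

section
/- Let K be a field, and B a unital subalgebra of K × K (with componentwise operations) that is a finite-dimensional algebra over a subfield and is not an integral domain, with both projections onto K surjective. Then B = K × K. -/
theorem stmt_7 (F K : Type*) [Field F] [Field K] [Algebra F K]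
    (B : Subalgebra F (K × K)) (hfd : FiniteDimensional F B)
    (hzd : ∃ b ∈ B, ∃ c ∈ B, b ≠ 0 ∧ c ≠ 0 ∧ b * c = 0)
    (h1 : ∀ x : K, ∃ b ∈ B, b.1 = x) (h2 : ∀ x : K, ∃ b ∈ B, b.2 = x) :
    B = ⊤ := by
  obtain ⟨b, hb, c, hc, hb0, hc0, hbc⟩ := hzd
  -- get z ∈ B with z.1 = 0, z.2 ≠ 0
  have hz : ∃ z ∈ B, z.1 = 0 ∧ z.2 ≠ 0 := by
    have h1' : b.1 * c.1 = 0 := congrArg Prod.fst hbc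
    by_cases hb1 : b.1 = 0
    · exact ⟨b, hb, hb1, fun h => hb0 (Prod.ext hb1 h)⟩
    · have hc1 : c.1 = 0 := by
        rcases mul_eq_zero.1 h1' with h | h
        · exact absurd h hb1
        · exact h
      exact ⟨c, hc, hc1, fun h => hc0 (Prod.ext hc1 h)⟩
  obtain ⟨z, hzB, hz1, hz2⟩ := hz
  obtain ⟨w, hwB, hw2⟩ := h2 z.2⁻¹
  have he : ((0, 1) : K × K) ∈ B := by
    have := B.mul_mem hzB hwB
    have heq : z * w = (0, 1) := by
      ext
      · simp [hz1]
      · simp [hw2, mul_inv_cancel₀ hz2]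
    rwa [heq] at this
  have hf : ((1, 0) : K × K) ∈ B := by
    have := B.sub_mem B.one_mem he
    have heq : (1 : K × K) - (0, 1) = (1, 0) := by ext <;> simp
    rwa [heq] at this
  rw [eq_top_iff]
  rintro ⟨x, y⟩ -
  obtain ⟨a, haB, ha1⟩ := h1 x
  obtain ⟨d, hdB, hd2⟩ := h2 y
  have h1' : ((x, 0) : K × K) ∈ B := by
    have := B.mul_mem haB hf
    have heq : a * (1, 0) = (x, 0) := by ext <;> simp [ha1]
    rwa [heq] at this
  have h2' : ((0, y) : K × K) ∈ B := by
    have := B.mul_mem hdB he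
    have heq : d * (0, 1) = (0, y) := by ext <;> simp [hd2]
    rwa [heq] at this
  have := B.add_mem h1' h2'
  simpa using this
end

section
/- Let d ≥ 1 be odd, a ≥ 1 odd, and ζ ∈ ℂ a primitive d-th root of unity. Then the field ℚ(ζ) is generated as a unital ℚ-algebra by the single element (ζ - 1)^(d·a). -/
open Complex IntermediateField

private lemma key_root {d n : ℕ} (hd : 1 < d) (hn : Odd n) (hdn : d ∣ n) {ζ η : ℂ}
    (hζ : IsPrimitiveRoot ζ d) (hη : IsPrimitiveRoot η d)
    (h : (η - 1) ^ n = (ζ - 1) ^ n) : η = ζ := by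
  have hd0 : d ≠ 0 := by omega
  have hn0 : n ≠ 0 := by rintro rfl; simp at hn
  have hζ1 : Complex.normSq ζ = 1 := by
    have h1 := hζ.norm'_eq_one hd0
    rw [← Complex.sq_norm, h1]; norm_num
  have hη1 : Complex.normSq η = 1 := by
    have h1 := hη.norm'_eq_one hd0
    rw [← Complex.sq_norm, h1]; norm_num
  have hcu : (starRingEnd ℂ) ζ * ζ = 1 := by
    rw [mul_comm, Complex.mul_conj, hζ1, Complex.ofReal_one]
  have hc : ((starRingEnd ℂ) η - 1) ^ n = ((starRingEnd ℂ) ζ - 1) ^ n := by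
    simpa using congrArg (starRingEnd ℂ) h
  have hm : (Complex.normSq (η - 1) : ℂ) ^ n = (Complex.normSq (ζ - 1) : ℂ) ^ n := by
    rw [← Complex.mul_conj, ← Complex.mul_conj, mul_pow, mul_pow, h, map_sub, map_one,
      map_sub, map_one, hc]
  rw [← Complex.ofReal_pow, ← Complex.ofReal_pow, Complex.ofReal_inj] at hm
  have hm' : Complex.normSq (η - 1) = Complex.normSq (ζ - 1) := hn.strictMono_pow.injective hm
  simp only [Complex.normSq_apply, Complex.sub_re, Complex.sub_im, Complex.one_re,
    Complex.one_im] at hm' hζ1 hη1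
  have hre : η.re = ζ.re := by nlinarith
  have him2 : η.im ^ 2 = ζ.im ^ 2 := by nlinarith
  rcases sq_eq_sq_iff_eq_or_eq_neg.mp him2 with him | him
  · exact Complex.ext hre him
  · have hηc : η = (starRingEnd ℂ) ζ := by
      apply Complex.ext <;> simp [hre, him]
    have hζn : ζ ^ n = 1 := by
      obtain ⟨c, rfl⟩ := hdn; rw [pow_mul, hζ.pow_eq_one, one_pow]
    have hcm : (starRingEnd ℂ) ζ - 1 = (starRingEnd ℂ) ζ * (1 - ζ) := by
      rw [mul_sub, mul_one, hcu]
    rw [hηc, hcm, mul_pow, ← map_pow, hζn, map_one, one_mul,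
      show (1 - ζ) = -(ζ - 1) by ring, hn.neg_pow] at h
    have h0 : (ζ - 1) ^ n = 0 := by linear_combination (-1/2 : ℂ) * h
    have hζeq1 : ζ = 1 := by
      have := pow_eq_zero_iff hn0 |>.mp h0
      rwa [sub_eq_zero] at this
    rw [hζeq1] at hζ
    have := Nat.dvd_one.mp (hζ.dvd_of_pow_eq_one 1 (one_pow 1))
    omega

theorem stmt_8 (d a : ℕ) (hd : 1 ≤ d) (ha : 1 ≤ a) (hdo : Odd d) (hao : Odd a)
    (ζ : ℂ) (hζ : IsPrimitiveRoot ζ d) :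
    Algebra.adjoin ℚ {(ζ - 1) ^ (d * a)} = Algebra.adjoin ℚ {ζ} := by
  rcases eq_or_lt_of_le hd with hd1 | hd1
  · subst hd1
    have hζ1 : ζ = 1 := IsPrimitiveRoot.one_right_iff.mp hζ
    subst hζ1
    have h0 : ((1 : ℂ) - 1) ^ (1 * a) = 0 := by
      rw [sub_self, one_mul]; exact zero_pow (by omega)
    rw [h0]
    apply le_antisymm <;> apply Algebra.adjoin_le <;>
      simp [Set.singleton_subset_iff, Subalgebra.zero_mem, Subalgebra.one_mem] <;>
        exact ⟨1, by simp⟩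
  · have hdpos : 0 < d := by omega
    have hd0 : d ≠ 0 := by omega
    have hd0 : d ≠ 0 := by omega
    have hn : Odd (d * a) := hdo.mul hao
    have hζint : IsIntegral ℚ ζ :=
      ⟨Polynomial.X ^ d - 1, by simpa using Polynomial.monic_X_pow_sub_C (1 : ℚ) hd0,
        by simp [hζ.pow_eq_one]⟩
    have hxint : IsIntegral ℚ ((ζ - 1) ^ (d * a)) := (hζint.sub isIntegral_one).pow _
    suffices hF : ℚ⟮(ζ - 1) ^ (d * a)⟯ = ℚ⟮ζ⟯ by
      rw [← adjoin_simple_toSubalgebra_of_isAlgebraic hxint.isAlgebraic,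
        ← adjoin_simple_toSubalgebra_of_isAlgebraic hζint.isAlgebraic, hF]
    have hfin : FiniteDimensional ℚ ℚ⟮ζ⟯ := adjoin.finiteDimensional hζint
    set K := ℚ⟮ζ⟯ with hK
    set ζ' : K := AdjoinSimple.gen ℚ ζ with hζ'def
    have hvalζ : algebraMap K ℂ ζ' = ζ := AdjoinSimple.algebraMap_gen ℚ ζ
    have hinj : Function.Injective (algebraMap K ℂ) := (algebraMap K ℂ).injective
    have hζ' : IsPrimitiveRoot ζ' d :=
      IsPrimitiveRoot.of_map_of_injective (f := algebraMap K ℂ) (by rwa [hvalζ]) hinj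
    haveI : NeZero d := ⟨hd0⟩
    haveI hcyc : IsCyclotomicExtension {d} ℚ
        (Algebra.adjoin ℚ ({ζ} : Set ℂ)) :=
      IsPrimitiveRoot.adjoin_isCyclotomicExtension ℚ (n := d) hζ
    haveI : IsCyclotomicExtension {d} ℚ K :=
      IsCyclotomicExtension.equiv (S := {d}) ℚ
        (Algebra.adjoin ℚ ({ζ} : Set ℂ))
        (Subalgebra.equivOfEq (Algebra.adjoin ℚ ({ζ} : Set ℂ)) K.toSubalgebra
          (adjoin_simple_toSubalgebra_of_isAlgebraic hζint.isAlgebraic).symm)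
    haveI : IsGalois ℚ K := IsCyclotomicExtension.isGalois {d} ℚ K
    set E : IntermediateField ℚ K := ℚ⟮(ζ' - 1) ^ (d * a)⟯ with hE
    have hgen : ζ' ∈ E := by
      have hfix : ζ' ∈ fixedField E.fixingSubgroup := by
        rintro ⟨σ, hσ⟩
        show σ ζ' = ζ'
        have hx : σ ((ζ' - 1) ^ (d * a)) = (ζ' - 1) ^ (d * a) :=
          (E.mem_fixingSubgroup_iff σ).mp hσ _ (mem_adjoin_simple_self ℚ _)
        rw [map_pow, map_sub, map_one] at hx
        have hσζ : IsPrimitiveRoot (σ ζ') d := hζ'.map_of_injective σ.injective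
        have heq : (algebraMap K ℂ (σ ζ') - 1) ^ (d * a) = (ζ - 1) ^ (d * a) := by
          have := congrArg (algebraMap K ℂ) hx
          simpa [map_pow, map_sub, map_one, hvalζ] using this
        have hfin2 : algebraMap K ℂ (σ ζ') = ζ :=
          key_root hd1 hn ⟨a, rfl⟩ hζ (hσζ.map_of_injective hinj) heq
        exact hinj (by rw [hfin2, hvalζ])
      rwa [IsGalois.fixedField_fixingSubgroup E] at hfix
    have hmem : ζ ∈ E.map K.val := ⟨ζ', hgen, hvalζ⟩
    have hmap : E.map K.val = ℚ⟮(ζ - 1) ^ (d * a)⟯ := by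
      rw [hE]
      erw [adjoin_map]
      rw [Set.image_singleton]
      have : K.val ((ζ' - 1) ^ (d * a)) = (ζ - 1) ^ (d * a) := by
        rw [map_pow, map_sub, map_one]
        congr 1
      rw [this]
    rw [hmap] at hmem
    refine le_antisymm (adjoin_simple_le_iff.mpr ?_) (adjoin_simple_le_iff.mpr hmem)
    exact pow_mem (sub_mem (mem_adjoin_simple_self ℚ ζ) (one_mem _)) _
end

section
/- Let d ≥ 2, ζ = e^(2πi/d), k ≥ 1, and α an integer with 1 ≤ α ≤ d-1 and gcd(α, d) = 1. If (ζ^α - 1)^k = (ζ - 1)^k then α = 1, or α = d - 1 and k(2 - d) ∈ 2dℤ. -/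
open Complex Real

lemma factor_auxC (t : ℂ) :
    Complex.exp ((2*t) * Complex.I) - 1
      = Complex.exp (t * Complex.I) * (2 * Complex.sin t * Complex.I) := by
  rw [Complex.exp_mul_I, Complex.exp_mul_I, Complex.cos_two_mul, Complex.sin_two_mul]
  have h := Complex.sin_sq_add_cos_sq t
  have hI : Complex.I^2 = -1 := Complex.I_sq
  linear_combination 2 * h - 2 * Complex.sin t ^ 2 * hI

lemma factor_aux (t : ℝ) :
    Complex.exp (((2*t : ℝ)) * Complex.I) - 1
      = Complex.exp ((t:ℝ) * Complex.I) * (((2 * Real.sin t : ℝ):ℂ) * Complex.I) := by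
  have := factor_auxC (t : ℂ)
  push_cast
  convert this using 3

lemma abs_aux (t : ℝ) (ht : 0 ≤ Real.sin t) :
    ‖Complex.exp ((t:ℝ) * Complex.I) * (((2 * Real.sin t : ℝ):ℂ) * Complex.I)‖
      = 2 * Real.sin t := by
  rw [norm_mul, norm_mul, Complex.norm_exp_ofReal_mul_I, Complex.norm_I]
  rw [Complex.norm_real, Real.norm_eq_abs, _root_.abs_of_nonneg (by positivity : (0:ℝ) ≤ 2 * Real.sin t)]
  ring

theorem stmt_10 (d : ℕ) (hd : 2 ≤ d) (k : ℕ) (hk : 1 ≤ k) (α : ℕ)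
    (hα1 : 1 ≤ α) (hα2 : α ≤ d - 1) (hcop : Nat.gcd α d = 1)
    (ζ : ℂ) (hζ : ζ = Complex.exp (2 * Real.pi * Complex.I / d))
    (heq : (ζ ^ α - 1) ^ k = (ζ - 1) ^ k) :
    α = 1 ∨ (α = d - 1 ∧ (2 * (d : ℤ)) ∣ (k : ℤ) * (2 - (d : ℤ))) := by
  have hdR : (0:ℝ) < d := by positivity
  obtain ⟨θ, hθ⟩ : ∃ x : ℝ, x = Real.pi / d := ⟨_, rfl⟩
  have hθpos : 0 < θ := by rw [hθ]; positivity
  have hαd : α < d := by omega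
  have hdθ : (d:ℝ) * θ = Real.pi := by rw [hθ]; field_simp
  have hαθlt : (α:ℝ) * θ < Real.pi := by
    have h1 : (α:ℝ) < d := by exact_mod_cast hαd
    have h2 : (α:ℝ) * θ < (d:ℝ) * θ := mul_lt_mul_of_pos_right h1 hθpos
    linarith
  have hαθpos : 0 < (α:ℝ) * θ := by
    have : (1:ℝ) ≤ α := by exact_mod_cast hα1
    nlinarith
  have hθle : θ ≤ Real.pi / 2 := by
    rw [hθ]
    have h2 : (2:ℝ) ≤ d := by exact_mod_cast hd
    gcongr
  have hζ2 : ζ = Complex.exp (((2 * θ : ℝ)) * Complex.I) := by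
    rw [hζ, hθ]
    congr 1
    push_cast
    field_simp
  have hζα : ζ ^ α = Complex.exp (((2 * ((α:ℝ) * θ) : ℝ)) * Complex.I) := by
    rw [hζ2, ← Complex.exp_nat_mul]
    congr 1
    push_cast
    ring
  have hfα : ζ ^ α - 1
      = Complex.exp (((α:ℝ) * θ : ℝ) * Complex.I) * (((2 * Real.sin ((α:ℝ)*θ) : ℝ):ℂ) * Complex.I) := by
    rw [hζα]; exact factor_aux _
  have hf1 : ζ - 1
      = Complex.exp ((θ : ℝ) * Complex.I) * (((2 * Real.sin θ : ℝ):ℂ) * Complex.I) := by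
    rw [hζ2]; exact factor_aux _
  have hsinα : 0 < Real.sin ((α:ℝ)*θ) := Real.sin_pos_of_pos_of_lt_pi hαθpos hαθlt
  have hsinθ : 0 < Real.sin θ := Real.sin_pos_of_pos_of_lt_pi hθpos (by nlinarith [Real.pi_pos])
  have habs : (2 * Real.sin ((α:ℝ)*θ))^k = (2 * Real.sin θ)^k := by
    have := congrArg (fun z : ℂ => ‖z‖) heq
    rwa [hfα, hf1, norm_pow, norm_pow, abs_aux _ hsinα.le, abs_aux _ hsinθ.le] at this
  have hsineq : Real.sin ((α:ℝ)*θ) = Real.sin θ := by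
    have h2 : (2:ℝ) * Real.sin ((α:ℝ)*θ) = 2 * Real.sin θ :=
      (pow_left_inj₀ (by positivity) (by positivity) (by omega)).mp habs
    linarith
  rcases le_or_gt ((α:ℝ)*θ) (Real.pi/2) with hle | hgt
  · left
    have := Real.injOn_sin (Set.mem_Icc.mpr ⟨by linarith, hle⟩)
      (Set.mem_Icc.mpr ⟨by linarith, hθle⟩) hsineq
    have hα' : (α:ℝ) = 1 := by
      have := mul_right_cancel₀ (ne_of_gt hθpos) (by linarith : (α:ℝ)*θ = 1*θ)
      linarith
    exact_mod_cast hα'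
  · have hrefl : Real.sin (Real.pi - (α:ℝ)*θ) = Real.sin θ := by
      rw [Real.sin_pi_sub]; exact hsineq
    have hsub := Real.injOn_sin (Set.mem_Icc.mpr ⟨by linarith, by linarith⟩)
      (Set.mem_Icc.mpr ⟨by linarith, hθle⟩) hrefl
    have hcan : (α:ℝ)*θ = ((d:ℝ)-1)*θ := by
      rw [sub_mul, one_mul, hdθ]; linarith
    have hαeq : (α:ℝ) = (d:ℝ) - 1 := mul_right_cancel₀ (ne_of_gt hθpos) hcan
    have hαnat : α = d - 1 := by
      have h1 : (α:ℝ) + 1 = (d:ℝ) := by linarith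
      have h2 : α + 1 = d := by exact_mod_cast h1
      omega
    right
    refine ⟨hαnat, ?_⟩
    have hXne : (((2 * Real.sin θ : ℝ):ℂ) * Complex.I)^k ≠ 0 := by
      apply pow_ne_zero
      apply mul_ne_zero _ Complex.I_ne_zero
      exact_mod_cast (by positivity : (2 * Real.sin θ : ℝ) ≠ 0)
    have hexp : Complex.exp (((α:ℝ) * θ : ℝ) * Complex.I)^k
        = Complex.exp ((θ : ℝ) * Complex.I)^k := by
      have h := heq
      rw [hfα, hf1, hsineq] at h
      have h2 : Complex.exp (((α:ℝ) * θ : ℝ) * Complex.I)^k * (((2 * Real.sin θ : ℝ):ℂ) * Complex.I)^k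
          = Complex.exp ((θ : ℝ) * Complex.I)^k * (((2 * Real.sin θ : ℝ):ℂ) * Complex.I)^k := by
        rw [← mul_pow, ← mul_pow]; exact h
      exact mul_right_cancel₀ hXne h2
    have hexp1 : Complex.exp ((((k:ℝ) * ((α:ℝ)*θ) - (k:ℝ)*θ : ℝ)) * Complex.I) = 1 := by
      rw [← Complex.exp_nat_mul, ← Complex.exp_nat_mul] at hexp
      have h3 : Complex.exp ((k:ℂ) * (((α:ℝ)*θ : ℝ) * Complex.I) - (k:ℂ) * ((θ:ℝ) * Complex.I)) = 1 := by
        rw [Complex.exp_sub, hexp, div_self (Complex.exp_ne_zero _)]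
      convert h3 using 2
      push_cast
      ring
    obtain ⟨n, hn⟩ := Complex.exp_eq_one_iff.mp hexp1
    have hreal : (k:ℝ) * ((α:ℝ)*θ) - (k:ℝ)*θ = (n:ℝ) * (2 * Real.pi) := by
      have h4 : (((k:ℝ) * ((α:ℝ)*θ) - (k:ℝ)*θ : ℝ):ℂ) = (((n:ℝ) * (2 * Real.pi) : ℝ):ℂ) := by
        apply mul_right_cancel₀ Complex.I_ne_zero
        rw [hn]; push_cast; ring
      exact_mod_cast h4
    have hint : (k:ℤ) * ((α:ℤ) - 1) = n * (2 * d) := by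
      have h5 : ((k:ℝ) * ((α:ℝ) - 1)) * θ = ((n:ℝ) * (2 * (d:ℝ))) * θ := by
        linear_combination hreal - 2 * (n:ℝ) * hdθ
      have h6 : (k:ℝ) * ((α:ℝ) - 1) = (n:ℝ) * (2 * (d:ℝ)) :=
        mul_right_cancel₀ (ne_of_gt hθpos) h5
      exact_mod_cast h6
    refine ⟨-n, ?_⟩
    have hαd' : (α:ℤ) = (d:ℤ) - 1 := by exact_mod_cast hαeq
    rw [hαd'] at hint
    linear_combination -hint
end

section
/- Let n ≥ 2 and C = ℚ[X, Y]/(X^n - 1, Y^n - 1). Then the element X·Y^(n-1) belongs to the unital ℚ-subalgebra of C generated by the elements X^k - Y^k for 1 ≤ k ≤ n. -/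
set_option maxHeartbeats 1000000
open MvPolynomial

theorem stmt_11 (n : ℕ) (hn : 2 ≤ n) :
    Ideal.Quotient.mk
        (Ideal.span {(X 0 : MvPolynomial (Fin 2) ℚ) ^ n - 1, (X 1 : MvPolynomial (Fin 2) ℚ) ^ n - 1})
        (X 0 * X 1 ^ (n - 1)) ∈
      Algebra.adjoin ℚ
        {x | ∃ k : ℕ, 1 ≤ k ∧ k ≤ n ∧
          x = Ideal.Quotient.mk
            (Ideal.span {(X 0 : MvPolynomial (Fin 2) ℚ) ^ n - 1, (X 1 : MvPolynomial (Fin 2) ℚ) ^ n - 1})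
            (X 0 ^ k - X 1 ^ k)} := by
  set I := Ideal.span {(X 0 : MvPolynomial (Fin 2) ℚ) ^ n - 1, (X 1 : MvPolynomial (Fin 2) ℚ) ^ n - 1} with hI
  set π := Ideal.Quotient.mk I with hπ
  set A := Algebra.adjoin ℚ
        {x | ∃ k : ℕ, 1 ≤ k ∧ k ≤ n ∧
          x = π (X 0 ^ k - X 1 ^ k)} with hA
  set x := π (X 0) with hxdef
  set y := π (X 1) with hydef
  have hx : x ^ n = 1 := by
    have h0 : π ((X 0 : MvPolynomial (Fin 2) ℚ) ^ n - 1) = 0 :=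
      Ideal.Quotient.eq_zero_iff_mem.mpr (Ideal.subset_span (Set.mem_insert _ _))
    rw [map_sub, map_pow, map_one, sub_eq_zero] at h0
    exact h0
  have hy : y ^ n = 1 := by
    have h0 : π ((X 1 : MvPolynomial (Fin 2) ℚ) ^ n - 1) = 0 :=
      Ideal.Quotient.eq_zero_iff_mem.mpr (Ideal.subset_span (Set.mem_insert_of_mem _ rfl))
    rw [map_sub, map_pow, map_one, sub_eq_zero] at h0
    exact h0
  -- all differences of powers are in A
  have hg : ∀ m : ℕ, x ^ m - y ^ m ∈ A := by
    intro m
    have hxm : x ^ m = x ^ (m % n) := by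
      conv_lhs => rw [← Nat.mod_add_div m n]
      rw [pow_add, pow_mul, hx, one_pow, mul_one]
    have hym : y ^ m = y ^ (m % n) := by
      conv_lhs => rw [← Nat.mod_add_div m n]
      rw [pow_add, pow_mul, hy, one_pow, mul_one]
    rw [hxm, hym]
    rcases Nat.eq_zero_or_pos (m % n) with h | h
    · rw [h]; simp only [pow_zero, sub_self]; exact zero_mem A
    · apply Algebra.subset_adjoin
      refine ⟨m % n, h, le_of_lt (Nat.mod_lt m (by omega)), ?_⟩
      rw [map_sub, map_pow, map_pow]
  have hg1 : x - y ∈ A := by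
    have := hg 1
    simpa using this
  -- key lemma
  have key : ∀ d : ℕ, ∀ i j : ℕ, i + j = d → x ^ i * y ^ j * (x - y) ∈ A := by
    intro d
    induction d with
    | zero =>
      intro i j hij
      have hi : i = 0 := by omega
      have hj : j = 0 := by omega
      subst hi; subst hj
      simpa using hg1
    | succ d ih =>
      intro i j hij
      have hadj : ∀ i' j' : ℕ, i' + j' = d →
          x ^ (i'+1) * y ^ j' * (x - y) - x ^ i' * y ^ (j'+1) * (x - y) ∈ A := by
        intro i' j' hij'
        have h := mul_mem (ih i' j' hij') hg1
        convert h using 1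
        ring
      have hdiff : ∀ i' j' : ℕ, i' + j' = d + 1 →
          x ^ i' * y ^ j' * (x - y) - y ^ (d+1) * (x - y) ∈ A := by
        intro i'
        induction i' with
        | zero =>
          intro j' hj'
          have : j' = d + 1 := by omega
          subst this
          simp only [pow_zero, one_mul, sub_self]
          exact zero_mem A
        | succ i' ihd =>
          intro j' hj'
          have h1 := hadj i' j' (by omega)
          have h2 := ihd (j' + 1) (by omega)
          have h3 := add_mem h1 h2
          convert h3 using 1
          ring
      have hsum : (∑ k ∈ Finset.range (d+2), x ^ k * y ^ (d+1-k) * (x - y))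
          = x ^ (d+2) - y ^ (d+2) := by
        rw [← Finset.sum_mul]
        have h := geom_sum₂_mul x y (d+2)
        simpa using h
      have h1 : (∑ k ∈ Finset.range (d+2), x ^ k * y ^ (d+1-k) * (x - y)) ∈ A := by
        rw [hsum]; exact hg (d+2)
      have h2 : (∑ k ∈ Finset.range (d+2),
          (x ^ k * y ^ (d+1-k) * (x - y) - y ^ (d+1) * (x - y))) ∈ A :=
        sum_mem (fun k hk => hdiff k (d+1-k)
          (by have := Finset.mem_range.mp hk; omega))
      have e : (∑ k ∈ Finset.range (d+2), x ^ k * y ^ (d+1-k) * (x - y)) -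
          (∑ k ∈ Finset.range (d+2),
            (x ^ k * y ^ (d+1-k) * (x - y) - y ^ (d+1) * (x - y)))
          = (((d+2 : ℕ) : ℚ)) • (y ^ (d+1) * (x - y)) := by
        rw [Finset.sum_sub_distrib, Finset.sum_const, Finset.card_range, sub_sub_cancel,
          Nat.cast_smul_eq_nsmul]
      have h5 : (((d+2 : ℕ) : ℚ)) • (y ^ (d+1) * (x - y)) ∈ A := e ▸ sub_mem h1 h2
      have hb : y ^ (d+1) * (x - y) ∈ A := by
        have h6 := A.smul_mem h5 ((((d+2 : ℕ) : ℚ))⁻¹)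
        rwa [smul_smul, inv_mul_cancel₀ (by positivity), one_smul] at h6
      have h7 := add_mem (hdiff i j hij) hb
      convert h7 using 1
      ring
  -- finish
  have hy1 : y ^ (n-1) * y = y ^ n := by
    rw [← pow_succ]
    congr 1
    omega
  have hfinal : x * y ^ (n-1) = x ^ 0 * y ^ (n-1) * (x - y) + 1 := by
    rw [pow_zero, one_mul, mul_sub, hy1, hy]
    ring
  have hmem : x * y ^ (n-1) ∈ A := by
    rw [hfinal]
    exact add_mem (key (n-1) 0 (n-1) (by omega)) A.one_mem
  have hπgoal : π (X 0 * X 1 ^ (n-1)) = x * y ^ (n-1) := by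
    rw [map_mul, map_pow]
  rw [hπgoal]
  exact hmem
end

section
/- Let n be odd or n = 2, and C = ℚ[X, Y]/(X^n - 1, Y^n - 1). Then X·Y^(n-1) belongs to the unital ℚ-subalgebra of C generated by the single element X - Y. -/
open Real

lemma sin_eq_aux {n a b : ℕ} (hn : Odd n) (ha : a < n) (hb : b < n) (ha0 : 0 < a) (hb0 : 0 < b)
    (hab : a % 2 = b % 2) (h : Real.sin (π*a/n) = Real.sin (π*b/n)) : a = b := by
  have hn0 : 0 < n := hn.pos
  have hnR : (0:ℝ) < n := by exact_mod_cast hn0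
  have hxpos : 0 < π*a/n := by positivity
  have hypos : 0 < π*b/n := by positivity
  have hxlt : π*a/n < π := by
    rw [div_lt_iff₀ hnR]
    have : (a:ℝ) < n := by exact_mod_cast ha
    nlinarith [pi_pos]
  have hylt : π*b/n < π := by
    rw [div_lt_iff₀ hnR]
    have : (b:ℝ) < n := by exact_mod_cast hb
    nlinarith [pi_pos]
  have h0 : 2 * Real.sin ((π*a/n - π*b/n)/2) * Real.cos ((π*a/n + π*b/n)/2) = 0 := by
    rw [← Real.sin_sub_sin, h, sub_self]
  rcases mul_eq_zero.1 h0 with h1 | h2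
  · rcases mul_eq_zero.1 h1 with h1 | h1
    · norm_num at h1
    · rcases Real.sin_eq_zero_iff.1 h1 with ⟨k, hk⟩
      have hk0 : k = 0 := by
        by_contra hk0
        rcases lt_or_gt_of_ne hk0 with hkneg | hkpos
        · have hk1 : (k:ℝ) ≤ -1 := by exact_mod_cast (by omega : k ≤ -1)
          nlinarith [pi_pos]
        · have hk1 : (1:ℝ) ≤ (k:ℝ) := by exact_mod_cast (by omega : (1:ℤ) ≤ k)
          nlinarith [pi_pos]
      rw [hk0] at hk
      norm_num at hk
      have hab2 : π * (a:ℝ) = π * b := by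
        field_simp at hk
        linarith
      have : (a:ℝ) = b := mul_left_cancel₀ pi_ne_zero hab2
      exact_mod_cast this
  · rcases Real.cos_eq_zero_iff.1 h2 with ⟨k, hk⟩
    have hk0 : k = 0 := by
      by_contra hk0
      rcases lt_or_gt_of_ne hk0 with hkneg | hkpos
      · have hk1 : (k:ℝ) ≤ -1 := by exact_mod_cast (by omega : k ≤ -1)
        nlinarith [pi_pos]
      · have hk1 : (1:ℝ) ≤ (k:ℝ) := by exact_mod_cast (by omega : (1:ℤ) ≤ k)
        nlinarith [pi_pos]
    rw [hk0] at hk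
    norm_num at hk
    have hab' : (a:ℝ) + b = n := by
      have hne : (n:ℝ) ≠ 0 := ne_of_gt hnR
      field_simp at hk
      nlinarith [pi_pos, pi_ne_zero]
    have habn : a + b = n := by exact_mod_cast hab'
    exfalso
    rcases hn with ⟨m, hm⟩
    omega

lemma g_inj {n a b : ℕ} (hn : Odd n) (ha : a < n) (hb : b < n)
    (h : (-1:ℝ)^a * Real.sin (π*a/n) = (-1)^b * Real.sin (π*b/n)) : a = b := by
  have hn0 : 0 < n := hn.pos
  have hnR : (0:ℝ) < n := by exact_mod_cast hn0
  have sinpos : ∀ c : ℕ, 0 < c → c < n → 0 < Real.sin (π*c/n) := by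
    intro c hc0 hcn
    apply Real.sin_pos_of_pos_of_lt_pi
    · positivity
    · rw [div_lt_iff₀ hnR]
      have : (c:ℝ) < n := by exact_mod_cast hcn
      nlinarith [pi_pos]
  have key0 : ∀ c : ℕ, c < n → (-1:ℝ)^c * Real.sin (π*c/n) = 0 → c = 0 := by
    intro c hc hc0
    by_contra hcne
    have hsp := sinpos c (Nat.pos_of_ne_zero hcne) hc
    rcases mul_eq_zero.1 hc0 with h' | h'
    · exact absurd h' (pow_ne_zero _ (by norm_num))
    · linarith
  rcases Nat.eq_zero_or_pos a with ha0 | ha0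
  · subst ha0
    have : (-1:ℝ)^b * Real.sin (π*b/n) = 0 := by
      rw [← h]; simp
    exact (key0 b hb this).symm
  rcases Nat.eq_zero_or_pos b with hb0 | hb0
  · subst hb0
    have : (-1:ℝ)^a * Real.sin (π*a/n) = 0 := by
      rw [h]; simp
    exact key0 a ha this
  have hsa := sinpos a ha0 ha
  have hsb := sinpos b hb0 hb
  have hpar : a % 2 = b % 2 := by
    rcases Nat.even_or_odd a with hea | hoa <;> rcases Nat.even_or_odd b with heb | hob
    · rw [Nat.even_iff] at hea heb; omega
    · rw [hea.neg_one_pow, hob.neg_one_pow] at h; nlinarith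
    · rw [hoa.neg_one_pow, heb.neg_one_pow] at h; nlinarith
    · rw [Nat.odd_iff] at hoa hob; omega
  apply sin_eq_aux hn ha hb ha0 hb0 hpar
  rcases Nat.even_or_odd a with hea | hoa
  · have heb : Even b := by rcases Nat.even_or_odd b with h'|h'; exact h'; exfalso; rw [Nat.odd_iff] at h'; rw [Nat.even_iff] at hea; omega
    rwa [hea.neg_one_pow, heb.neg_one_pow, one_mul, one_mul] at h
  · have hob : Odd b := by rcases Nat.even_or_odd b with h'|h'; swap; exact h'; exfalso; rw [Nat.even_iff] at h'; rw [Nat.odd_iff] at hoa; omega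
    rw [hoa.neg_one_pow, hob.neg_one_pow, neg_one_mul, neg_one_mul] at h
    linarith

lemma two_I_sin (z : ℂ) : 2*Complex.I*Complex.sin z = Complex.exp (z*Complex.I) - Complex.exp (-z*Complex.I) := by
  rw [Complex.sin]
  linear_combination (Complex.exp (-z*Complex.I) - Complex.exp (z*Complex.I)) * Complex.I_sq

lemma exp_sub_one (z : ℂ) : Complex.exp (2*z*Complex.I) - 1 = Complex.exp (z*Complex.I) * (2*Complex.I*Complex.sin z) := by
  rw [two_I_sin, mul_sub, ← Complex.exp_add, ← Complex.exp_add]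
  rw [show z*Complex.I + -z*Complex.I = 0 by ring, Complex.exp_zero,
    show z*Complex.I + z*Complex.I = 2*z*Complex.I by ring]

lemma lam_formula {n : ℕ} (hn : Odd n) (a : ℕ) :
    (Complex.exp (2*(π:ℂ)*a/n*Complex.I) - 1)^n
      = (2*Complex.I)^n * ((((-1:ℝ)^a * Real.sin (π*a/n)) : ℝ) : ℂ)^n := by
  have hn0 : (n:ℂ) ≠ 0 := by
    exact_mod_cast Nat.cast_ne_zero.2 hn.pos.ne'
  set z : ℂ := (π:ℂ)*a/n with hz
  have h2z : 2*(π:ℂ)*a/n*Complex.I = 2*z*Complex.I := by rw [hz]; ring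
  rw [h2z, exp_sub_one, mul_pow, mul_pow]
  have he : Complex.exp (z*Complex.I)^n = (-1:ℂ)^a := by
    rw [← Complex.exp_nat_mul]
    have hnz : (n:ℂ)*(z*Complex.I) = (a:ℂ)*((π:ℂ)*Complex.I) := by
      rw [hz]; field_simp
    rw [hnz, Complex.exp_nat_mul, Complex.exp_pi_mul_I]
  have hs : Complex.sin z = (((Real.sin (π*a/n)) : ℝ) : ℂ) := by
    rw [Complex.ofReal_sin]
    congr 1
    rw [hz]; push_cast; ring
  rw [he, hs]
  push_cast
  rw [mul_pow ((-1:ℂ)^a), ← pow_mul]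
  have : (-1:ℂ)^(a*n) = (-1:ℂ)^a := by
    rcases Nat.even_or_odd a with hea | hoa
    · rw [hea.neg_one_pow, (hea.mul_right n).neg_one_pow]
    · rw [hoa.neg_one_pow, (hoa.mul hn).neg_one_pow]
  rw [this]; ring
lemma lam_inj {n : ℕ} (hn : Odd n) {a b : ℕ} (ha : a < n) (hb : b < n)
    (h : (Complex.exp (2*(π:ℂ)*a/n*Complex.I) - 1)^n
        = (Complex.exp (2*(π:ℂ)*b/n*Complex.I) - 1)^n) : a = b := by
  rw [lam_formula hn a, lam_formula hn b] at h
  have h2 : ((2:ℂ)*Complex.I)^n ≠ 0 := pow_ne_zero _ (by simp [Complex.I_ne_zero])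
  have h3 := mul_left_cancel₀ h2 h
  have h4 : ((-1:ℝ)^a * Real.sin (π*a/n))^n = ((-1:ℝ)^b * Real.sin (π*b/n))^n := by
    exact_mod_cast h3
  exact g_inj hn ha hb ((Odd.strictMono_pow hn (R := ℝ)).injective h4)

lemma key_two :
    (AdjoinRoot.root ((Polynomial.X : Polynomial ℚ)^2 - 1)) ∈
      Algebra.adjoin ℚ {((AdjoinRoot.root ((Polynomial.X : Polynomial ℚ)^2 - 1)) - 1)^2} := by
  set A := AdjoinRoot ((Polynomial.X : Polynomial ℚ)^2 - 1) with hA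
  set r : A := AdjoinRoot.root ((Polynomial.X : Polynomial ℚ)^2 - 1) with hr
  have h2 : r^2 - 1 = 0 := by
    have h0 : AdjoinRoot.mk ((Polynomial.X : Polynomial ℚ)^2 - 1)
        ((Polynomial.X : Polynomial ℚ)^2 - 1) = 0 := AdjoinRoot.mk_self
    rw [map_sub, map_pow, map_one] at h0
    exact h0
  have hexp : (r-1)^2 = algebraMap ℚ A 2 * (1 - r) := by
    rw [map_ofNat]
    linear_combination h2
  have hsmul : (2⁻¹:ℚ) • ((r-1)^2) = 1 - r := by
    rw [Algebra.smul_def, hexp, ← mul_assoc, ← map_mul]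
    norm_num
  have hv : ((r - 1)^2 : A) ∈ Algebra.adjoin ℚ {(r-1)^2} :=
    Algebra.self_mem_adjoin_singleton ℚ _
  have hmem : (1:A) - (2⁻¹:ℚ) • ((r-1)^2) ∈ Algebra.adjoin ℚ {(r-1)^2} :=
    sub_mem (one_mem _) (SMulMemClass.smul_mem _ hv)
  have heq : (1:A) - (2⁻¹:ℚ) • ((r-1)^2) = r := by rw [hsmul]; ring
  rwa [heq] at hmem
lemma key_odd {n : ℕ} (hn : Odd n) :
    (AdjoinRoot.root ((Polynomial.X : Polynomial ℚ)^n - 1)) ∈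
      Algebra.adjoin ℚ {((AdjoinRoot.root ((Polynomial.X : Polynomial ℚ)^n - 1)) - 1)^n} := by
  have hn0 : n ≠ 0 := hn.pos.ne'
  set f : Polynomial ℚ := Polynomial.X^n - 1 with hfdef
  have hmonic : f.Monic := by
    have := Polynomial.monic_X_pow_sub_C (1 : ℚ) hn0
    simpa [hfdef] using this
  have hfne : f ≠ 0 := hmonic.ne_zero
  have hdeg : f.natDegree = n := by
    rw [hfdef, ← Polynomial.C_1, Polynomial.natDegree_X_pow_sub_C]
  letI pb := AdjoinRoot.powerBasis hfne
  haveI : Module.Finite ℚ (AdjoinRoot f) := pb.finite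
  set r : AdjoinRoot f := AdjoinRoot.root f with hr
  set v : AdjoinRoot f := (r - 1)^n with hv
  have hint : IsIntegral ℚ v := IsIntegral.of_finite ℚ v
  set p : Polynomial ℚ := minpoly ℚ v with hp
  set P : Polynomial ℂ := p.map (algebraMap ℚ ℂ) with hP
  have hpne : p ≠ 0 := (minpoly.monic hint).ne_zero
  have hPne : P ≠ 0 := by
    rw [hP]
    exact (Polynomial.map_ne_zero_iff (algebraMap ℚ ℂ).injective).2 hpne
  have hroot : ∀ a : ℕ, (Polynomial.aeval (Complex.exp (2*(π:ℂ)*a/n*Complex.I)) f) = 0 := by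
    intro a
    rw [hfdef]
    simp only [map_sub, map_pow, map_one, Polynomial.aeval_X]
    rw [← Complex.exp_nat_mul,
      show (n:ℂ) * (2*(π:ℂ)*a/n*Complex.I) = a*(2*(π:ℂ)*Complex.I) by
        have : (n:ℂ) ≠ 0 := Nat.cast_ne_zero.2 hn0
        field_simp,
      Complex.exp_nat_mul_two_pi_mul_I a, sub_self]
  have hlam : ∀ a : ℕ, ((Complex.exp (2*(π:ℂ)*a/n*Complex.I)) - 1)^n ∈ P.roots := by
    intro a
    have φ := AdjoinRoot.liftAlgHom f (Algebra.ofId ℚ ℂ) _ (hroot a)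
    have hφv : (AdjoinRoot.liftAlgHom f (Algebra.ofId ℚ ℂ) _ (hroot a)) v = ((Complex.exp (2*(π:ℂ)*a/n*Complex.I)) - 1)^n := by
      rw [hv, map_pow, map_sub, map_one, hr]; congr 2; exact AdjoinRoot.liftAlgHom_root _ _ _ _
    have haev : Polynomial.aeval (((Complex.exp (2*(π:ℂ)*a/n*Complex.I)) - 1)^n) p = 0 := by
      rw [← hφv, Polynomial.aeval_algHom_apply, minpoly.aeval, map_zero]
    rw [Polynomial.mem_roots hPne]
    rw [Polynomial.IsRoot, hP, Polynomial.eval_map, ← Polynomial.aeval_def]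
    exact haev
  -- injectivity gives n ≤ natDegree p
  have hcard : n ≤ p.natDegree := by
    set g : Fin n → ℂ := fun a => ((Complex.exp (2*(π:ℂ)*(a:ℕ)/n*Complex.I)) - 1)^n with hg
    have ginj : Function.Injective g := by
      intro a b hab
      exact Fin.ext (lam_inj hn a.2 b.2 hab)
    have hsub : Finset.univ.image g ⊆ P.roots.toFinset := by
      intro x hx
      rcases Finset.mem_image.1 hx with ⟨a, _, rfl⟩
      exact Multiset.mem_toFinset.2 (hlam a)
    calc n = (Finset.univ.image g).card := by
              rw [Finset.card_image_of_injective _ ginj, Finset.card_univ, Fintype.card_fin]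
      _ ≤ P.roots.toFinset.card := Finset.card_le_card hsub
      _ ≤ Multiset.card P.roots := P.roots.toFinset_card_le
      _ ≤ P.natDegree := Polynomial.card_roots' P
      _ = p.natDegree := by rw [hP, Polynomial.natDegree_map]
  -- dimension count
  letI pb2 := Algebra.adjoin.powerBasis (K := ℚ) hint
  have hfr1 : Module.finrank ℚ (AdjoinRoot f) = n := by
    rw [pb.finrank]
    show f.natDegree = n
    exact hdeg
  have hfr2 : Module.finrank ℚ (Algebra.adjoin ℚ ({v} : Set (AdjoinRoot f))) = p.natDegree := by
    rw [pb2.finrank]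
    rfl
  have hle : Module.finrank ℚ (Subalgebra.toSubmodule (Algebra.adjoin ℚ ({v} : Set (AdjoinRoot f)))) ≤ n := by
    rw [← hfr1]
    exact Submodule.finrank_le _
  have htop : Algebra.adjoin ℚ ({v} : Set (AdjoinRoot f)) = ⊤ := by
    apply Algebra.toSubmodule_eq_top.1
    apply Submodule.eq_top_of_finrank_eq
    rw [hfr1]
    have : Module.finrank ℚ (Subalgebra.toSubmodule (Algebra.adjoin ℚ ({v} : Set (AdjoinRoot f)))) = p.natDegree := by
      rw [Subalgebra.finrank_toSubmodule, hfr2]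
    omega
  rw [htop]
  trivial

open MvPolynomial

theorem stmt_12 (n : ℕ) (hn : Odd n ∨ n = 2) :
    Ideal.Quotient.mk
        (Ideal.span {(X 0 : MvPolynomial (Fin 2) ℚ) ^ n - 1, (X 1 : MvPolynomial (Fin 2) ℚ) ^ n - 1})
        (X 0 * X 1 ^ (n - 1)) ∈
      Algebra.adjoin ℚ
        {Ideal.Quotient.mk
          (Ideal.span {(X 0 : MvPolynomial (Fin 2) ℚ) ^ n - 1, (X 1 : MvPolynomial (Fin 2) ℚ) ^ n - 1})
          (X 0 - X 1)} := by
  have hn1 : 1 ≤ n := by rcases hn with h | h; exact h.pos; omega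
  obtain ⟨m, hm⟩ : ∃ m, n = m + 1 := ⟨n - 1, by omega⟩
  set I := Ideal.span {(X 0 : MvPolynomial (Fin 2) ℚ) ^ n - 1, (X 1 : MvPolynomial (Fin 2) ℚ) ^ n - 1} with hI
  set mkI := Ideal.Quotient.mk I with hmkI
  set x0 := mkI (X 0) with hx0
  set x1 := mkI (X 1) with hx1
  set t := mkI (X 0 - X 1) with ht
  set s := mkI (X 0 * X 1 ^ (n - 1)) with hs
  have h0 : x0 ^ n = 1 := by
    have hmem : ((X 0 : MvPolynomial (Fin 2) ℚ) ^ n - 1) ∈ I := Ideal.subset_span (by simp)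
    have h := (Ideal.Quotient.eq_zero_iff_mem).2 hmem
    rw [← hmkI, map_sub, map_pow, map_one] at h
    rw [← hx0] at h
    exact sub_eq_zero.1 h
  have h1 : x1 ^ n = 1 := by
    have hmem : ((X 1 : MvPolynomial (Fin 2) ℚ) ^ n - 1) ∈ I := Ideal.subset_span (by simp)
    have h := (Ideal.Quotient.eq_zero_iff_mem).2 hmem
    rw [← hmkI, map_sub, map_pow, map_one] at h
    rw [← hx1] at h
    exact sub_eq_zero.1 h
  have hts : s = x0 * x1 ^ (n - 1) := by rw [hs, map_mul, map_pow, ← hx0, ← hx1]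
  have htt : t = x0 - x1 := by rw [ht, map_sub, ← hx0, ← hx1]
  have hsn : s ^ n = 1 := by
    rw [hts, mul_pow, ← pow_mul, h0, mul_comm (n - 1) n, pow_mul, h1, one_pow, one_mul]
  have haev : Polynomial.aeval s ((Polynomial.X : Polynomial ℚ) ^ n - 1) = 0 := by
    rw [map_sub, map_pow, Polynomial.aeval_X, map_one, hsn, sub_self]
  set ψ := AdjoinRoot.liftAlgHom ((Polynomial.X : Polynomial ℚ) ^ n - 1) (Algebra.ofId ℚ _) s haev with hψ
  have hψr : ψ (AdjoinRoot.root ((Polynomial.X : Polynomial ℚ) ^ n - 1)) = s := by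
    rw [hψ]; exact AdjoinRoot.liftAlgHom_root _ _ _ haev
  have hst : x1 ^ (n - 1) * t = s - 1 := by
    rw [htt, hts]
    have hstep : x1 ^ (n - 1) * (x0 - x1) = x0 * x1 ^ (n - 1) - x1 ^ n := by
      subst hm; simp only [Nat.add_sub_cancel]; ring
    rw [hstep, h1]
  have hψv : ψ ((AdjoinRoot.root ((Polynomial.X : Polynomial ℚ) ^ n - 1) - 1) ^ n) = t ^ n := by
    rw [map_pow, map_sub, map_one, hψr]
    have hfac : (s - 1) ^ n = (x1 ^ (n - 1)) ^ n * t ^ n := by rw [← mul_pow, hst]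
    rw [hfac, ← pow_mul, mul_comm (n - 1) n, pow_mul, h1, one_pow, one_mul]
  have hkey : AdjoinRoot.root ((Polynomial.X : Polynomial ℚ) ^ n - 1) ∈
      Algebra.adjoin ℚ {(AdjoinRoot.root ((Polynomial.X : Polynomial ℚ) ^ n - 1) - 1) ^ n} := by
    rcases hn with h | h
    · exact key_odd h
    · subst h; exact key_two
  have h1' : s ∈ Algebra.adjoin ℚ
      (ψ '' {(AdjoinRoot.root ((Polynomial.X : Polynomial ℚ) ^ n - 1) - 1) ^ n}) := by
    rw [← AlgHom.map_adjoin]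
    exact Subalgebra.mem_map.2 ⟨_, hkey, hψr⟩
  rw [Set.image_singleton, hψv] at h1'
  have hle : Algebra.adjoin ℚ ({t ^ n} : Set _) ≤ Algebra.adjoin ℚ {t} := by
    apply Algebra.adjoin_le
    intro x hx
    rw [Set.mem_singleton_iff] at hx
    subst hx
    exact pow_mem (Algebra.self_mem_adjoin_singleton ℚ t) n
  exact hle h1'
end

section
/- Let G be a finite group and g ∈ G an element of order n. Define Ad(g), ad(g^k) ∈ End(ℚG) by Ad(g)(x) = g x g^(-1) and ad(g^k)(x) = g^k x - x g^k. Then Ad(g) is a polynomial with rational coefficients in the endomorphisms ad(g), ad(g²), ..., ad(g^(n-1)), and this polynomial depends only on n. -/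
/-- The commutator endomorphism `ad(g) : x ↦ gx - xg` of the group algebra `ℚG`. -/
noncomputable def adE (G : Type*) [Group G] (g : G) :
    Module.End ℚ (MonoidAlgebra ℚ G) :=
  LinearMap.mulLeft ℚ (MonoidAlgebra.of ℚ G g) - LinearMap.mulRight ℚ (MonoidAlgebra.of ℚ G g)

/-- The conjugation endomorphism `Ad(g) : x ↦ g x g⁻¹` of the group algebra `ℚG`. -/
noncomputable def AdE (G : Type*) [Group G] (g : G) :
    Module.End ℚ (MonoidAlgebra ℚ G) :=
  (LinearMap.mulLeft ℚ (MonoidAlgebra.of ℚ G g)).comp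
    (LinearMap.mulRight ℚ (MonoidAlgebra.of ℚ G g⁻¹))

lemma listProd_pow_eq_single {R : Type*} [Monoid R] {m : ℕ} (v : Fin m → R) (a : Fin m)
    (d : Fin m → ℕ) (h : ∀ i, i ≠ a → d i = 0) :
    (List.ofFn fun i => v i ^ d i).prod = v a ^ d a := by
  induction m with
  | zero => exact a.elim0
  | succ m ih =>
    rw [List.ofFn_succ, List.prod_cons]
    rcases Fin.eq_zero_or_eq_succ a with h0 | ⟨j, rfl⟩
    · subst h0
      have h1 : (List.ofFn fun i : Fin m => v i.succ ^ d i.succ).prod = 1 := by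
        apply List.prod_eq_one
        intro x hx
        rw [List.mem_ofFn] at hx
        obtain ⟨i, rfl⟩ := hx
        show v i.succ ^ d i.succ = 1
        rw [h i.succ (Fin.succ_ne_zero i), pow_zero]
      rw [h1, mul_one]
    · rw [h 0 (Ne.symm (Fin.succ_ne_zero j)), pow_zero, one_mul]
      exact ih (fun i => v i.succ) j (fun i => d i.succ)
        (fun i hi => h i.succ (by simpa using hi))

lemma listProd_pow_add {R : Type*} [Monoid R] {m : ℕ} (v : Fin m → R)
    (hv : ∀ i j, Commute (v i) (v j)) (d₁ d₂ : Fin m → ℕ) :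
    (List.ofFn fun i => v i ^ (d₁ i + d₂ i)).prod
      = (List.ofFn fun i => v i ^ d₁ i).prod * (List.ofFn fun i => v i ^ d₂ i).prod := by
  induction m with
  | zero => simp
  | succ m ih =>
    rw [List.ofFn_succ, List.ofFn_succ, List.ofFn_succ, List.prod_cons, List.prod_cons,
      List.prod_cons]
    have hcomm : Commute (v 0 ^ d₂ 0) (List.ofFn fun i : Fin m => v i.succ ^ d₁ i.succ).prod := by
      apply Commute.list_prod_right
      intro x hx
      rw [List.mem_ofFn] at hx
      obtain ⟨i, rfl⟩ := hx
      exact (hv 0 i.succ).pow_pow _ _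
    rw [ih (fun i => v i.succ) (fun i j => hv i.succ j.succ) (fun i => d₁ i.succ)
      (fun i => d₂ i.succ), pow_add]
    rw [mul_assoc, mul_assoc, ← mul_assoc (v 0 ^ d₂ 0), hcomm.eq, mul_assoc]

theorem stmt_14 (n : ℕ) (hn : 1 ≤ n) :
    ∃ P : ((Fin (n - 1)) →₀ ℕ) →₀ ℚ,
      ∀ (G : Type) [Group G] [Finite G] (g : G), orderOf g = n →
        AdE G g =
          P.sum fun d c =>
            c • (List.ofFn fun i : Fin (n - 1) => (adE G (g ^ ((i : ℕ) + 1))) ^ d i).prod := by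
  rcases eq_or_lt_of_le hn with h1 | h2
  · -- n = 1
    subst h1
    refine ⟨Finsupp.single 0 1, ?_⟩
    intro G _ _ g hg
    have hg1 : g = 1 := orderOf_eq_one_iff.mp hg
    subst hg1
    rw [Finsupp.sum_single_index (by simp)]
    simp only [Nat.sub_self]
    rw [List.ofFn_zero, List.prod_nil, one_smul]
    rw [AdE]
    have h1 : MonoidAlgebra.of ℚ G 1 = 1 := map_one _
    rw [inv_one, h1, LinearMap.mulLeft_one, LinearMap.mulRight_one]
    rfl
  · -- n ≥ 2
    have hm : 0 < n - 1 := by omega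
    set E : ℕ → (Fin (n-1) →₀ ℕ) :=
      fun k => Finsupp.single (⟨(k-1) % (n-1), Nat.mod_lt _ hm⟩ : Fin (n-1)) 1 with hE
    refine ⟨Finsupp.single (0 : Fin (n-1) →₀ ℕ) (1 : ℚ)
      + Finsupp.single (E 1 + E (n-1)) (-(1/2) : ℚ)
      + ∑ t ∈ Finset.Ioo 0 (n-1), Finsupp.single (E t + E (n-1-t) + E 1) (1/(2*(n:ℚ))), ?_⟩
    intro G _ _ g hg
    set L := LinearMap.mulLeft ℚ (MonoidAlgebra.of ℚ G g) with hLdef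
    set R := LinearMap.mulRight ℚ (MonoidAlgebra.of ℚ G g) with hRdef
    have hC : Commute L R := LinearMap.commute_mulLeft_right _ _
    have hLk : ∀ k : ℕ, LinearMap.mulLeft ℚ (MonoidAlgebra.of ℚ G (g^k)) = L^k := by
      intro k; rw [map_pow, hLdef, LinearMap.pow_mulLeft]
    have hRk : ∀ k : ℕ, LinearMap.mulRight ℚ (MonoidAlgebra.of ℚ G (g^k)) = R^k := by
      intro k; rw [map_pow, hRdef, LinearMap.pow_mulRight]
    have hu : ∀ k : ℕ, adE G (g^k) = L^k - R^k := by
      intro k; rw [adE, hLk, hRk]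
    have hgn : g ^ n = 1 := by rw [← hg]; exact pow_orderOf_eq_one g
    have hLn : L^n = 1 := by
      rw [← hLk, hgn, map_one, LinearMap.mulLeft_one]; rfl
    have hRn : R^n = 1 := by
      rw [← hRk, hgn, map_one, LinearMap.mulRight_one]; rfl
    have hAd : AdE G g = L * R^(n-1) := by
      have hginv : g⁻¹ = g^(n-1) := by
        apply inv_eq_of_mul_eq_one_right
        rw [← pow_succ', Nat.sub_add_cancel hn]
        exact hgn
      rw [AdE, hginv, hRk, ← hLdef, Module.End.mul_eq_comp]
    -- the main operator identity
    have tel1 : ∑ t ∈ Finset.range n, (L^t * R^(n-1-t)) * (L - R) = 0 := by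
      have htel : ∀ t ∈ Finset.range n,
          (L^t * R^(n-1-t)) * (L - R)
            = (L^(t+1) * R^(n-(t+1))) - (L^t * R^(n-t)) := by
        intro t ht
        rw [Finset.mem_range] at ht
        have ha : n - (t+1) = n - 1 - t := by omega
        have hb : n - t = (n - 1 - t) + 1 := by omega
        rw [mul_sub]
        congr 1
        · rw [mul_assoc, ((hC.symm).pow_left (n-1-t)).eq, ← mul_assoc, ← pow_succ, ha]
        · rw [mul_assoc, ← pow_succ, hb]
      rw [Finset.sum_congr rfl htel, Finset.sum_range_sub (fun t => L^t * R^(n-t))]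
      simp [hLn, hRn]
    have tel2 : ∑ t ∈ Finset.range n, (L^(n-1-t) * R^t) * (L - R) = 0 := by
      have htel : ∀ t ∈ Finset.range n,
          (L^(n-1-t) * R^t) * (L - R)
            = (L^(n-t) * R^t) - (L^(n-(t+1)) * R^(t+1)) := by
        intro t ht
        rw [Finset.mem_range] at ht
        have ha : n - t = (n - 1 - t) + 1 := by omega
        have hb : n - (t+1) = n - 1 - t := by omega
        rw [mul_sub]
        congr 1
        · rw [mul_assoc, ((hC.symm).pow_left t).eq, ← mul_assoc, ← pow_succ, ha]
        · rw [mul_assoc, ← pow_succ, hb]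
      rw [Finset.sum_congr rfl htel, Finset.sum_range_sub' (fun t => L^(n-t) * R^t)]
      simp [hLn, hRn]
    have expand : ∀ t ∈ Finset.range n,
        (L^t - R^t) * (L^(n-1-t) - R^(n-1-t)) * (L - R)
          = (L^(n-1) + R^(n-1)) * (L - R)
            - (L^t * R^(n-1-t)) * (L - R) - (L^(n-1-t) * R^t) * (L - R) := by
      intro t ht
      rw [Finset.mem_range] at ht
      have h1 : L^t * L^(n-1-t) = L^(n-1) := by rw [← pow_add]; congr 1; omega
      have h2 : R^t * R^(n-1-t) = R^(n-1) := by rw [← pow_add]; congr 1; omega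
      have h3 : R^t * L^(n-1-t) = L^(n-1-t) * R^t := ((hC.symm).pow_pow t (n-1-t)).eq
      have hx : (L^t - R^t) * (L^(n-1-t) - R^(n-1-t))
          = (L^(n-1) + R^(n-1)) - L^t * R^(n-1-t) - L^(n-1-t) * R^t := by
        rw [sub_mul, mul_sub, mul_sub, h1, h2, h3]
        abel
      rw [hx, sub_mul, sub_mul]
    have main : L * R^(n-1)
        = (1 : Module.End ℚ (MonoidAlgebra ℚ G))
          - (1/2 : ℚ) • ((L - R) * (L^(n-1) - R^(n-1)))
          + (1/(2*(n:ℚ))) • ∑ t ∈ Finset.Ioo 0 (n-1),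
              ((L^t - R^t) * (L^(n-1-t) - R^(n-1-t)) * (L - R)) := by
      have hsum_ext : ∑ t ∈ Finset.Ioo 0 (n-1),
            ((L^t - R^t) * (L^(n-1-t) - R^(n-1-t)) * (L - R))
          = ∑ t ∈ Finset.range n,
            ((L^t - R^t) * (L^(n-1-t) - R^(n-1-t)) * (L - R)) := by
        apply Finset.sum_subset
        · intro t ht
          rw [Finset.mem_Ioo] at ht
          rw [Finset.mem_range]
          omega
        · intro t ht hnot
          rw [Finset.mem_range] at ht
          rw [Finset.mem_Ioo] at hnot
          have : t = 0 ∨ t = n - 1 := by omega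
          rcases this with rfl | rfl
          · simp
          · have h0 : n - 1 - (n-1) = 0 := by omega
            rw [h0]
            simp
      have hsum : ∑ t ∈ Finset.range n,
            ((L^t - R^t) * (L^(n-1-t) - R^(n-1-t)) * (L - R))
          = (n : ℚ) • ((L^(n-1) + R^(n-1)) * (L - R)) := by
        rw [Finset.sum_congr rfl expand]
        rw [Finset.sum_sub_distrib, Finset.sum_sub_distrib, tel1, tel2,
          Finset.sum_const, Finset.card_range]
        simp [Nat.cast_smul_eq_nsmul]
      rw [hsum_ext, hsum, smul_smul]
      have hn0 : (n : ℚ) ≠ 0 := Nat.cast_ne_zero.mpr (by omega)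
      have hhalf : (1/(2*(n:ℚ))) * (n:ℚ) = 1/2 := by field_simp
      rw [hhalf]
      have e1 : (L - R) * (L^(n-1) - R^(n-1))
          = (1 + 1) - L * R^(n-1) - L^(n-1) * R := by
        have h1 : L * L^(n-1) = 1 := by rw [← pow_succ', Nat.sub_add_cancel hn, hLn]
        have h2 : R * R^(n-1) = 1 := by rw [← pow_succ', Nat.sub_add_cancel hn, hRn]
        have h3 : R * L^(n-1) = L^(n-1) * R := ((hC.symm).pow_right (n-1)).eq
        rw [sub_mul, mul_sub, mul_sub, h1, h2, h3]
        abel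
      have e2 : (L^(n-1) + R^(n-1)) * (L - R)
          = L * R^(n-1) - L^(n-1) * R := by
        have h1 : L^(n-1) * L = 1 := by rw [← pow_succ, Nat.sub_add_cancel hn, hLn]
        have h2 : R^(n-1) * R = 1 := by rw [← pow_succ, Nat.sub_add_cancel hn, hRn]
        have h3 : R^(n-1) * L = L * R^(n-1) := ((hC.symm).pow_left (n-1)).eq
        rw [add_mul, mul_sub, mul_sub, h1, h2, h3]
        abel
      rw [e1, e2]
      module
    -- now compute the Finsupp sum
    set v : Fin (n-1) → Module.End ℚ (MonoidAlgebra ℚ G) :=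
      fun i => adE G (g ^ ((i : ℕ) + 1)) with hv
    set f : (Fin (n-1) →₀ ℕ) → ℚ → Module.End ℚ (MonoidAlgebra ℚ G) :=
      fun d c => c • (List.ofFn fun i : Fin (n - 1) => v i ^ d i).prod
      with hf
    have hvc : ∀ i j, Commute (v i) (v j) := by
      intro i j
      simp only [hv]
      rw [hu, hu]
      exact Commute.sub_left
        (Commute.sub_right ((Commute.refl L).pow_pow _ _) (hC.pow_pow _ _))
        (Commute.sub_right ((hC.symm).pow_pow _ _) ((Commute.refl R).pow_pow _ _))
    have hMadd : ∀ d₁ d₂ : Fin (n-1) →₀ ℕ,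
        (List.ofFn fun i => v i ^ (d₁ + d₂) i).prod
          = (List.ofFn fun i => v i ^ d₁ i).prod * (List.ofFn fun i => v i ^ d₂ i).prod := by
      intro d₁ d₂
      have h0 : (fun i => v i ^ (d₁ + d₂) i) = fun i => v i ^ (d₁ i + d₂ i) := by
        funext i; rw [Finsupp.add_apply]
      rw [h0]
      exact listProd_pow_add v hvc _ _
    have hME : ∀ k : ℕ, 1 ≤ k → k ≤ n - 1 →
        (List.ofFn fun i => v i ^ (E k) i).prod = L^k - R^k := by
      intro k hk1 hk2
      simp only [hE]
      rw [listProd_pow_eq_single v ⟨(k-1) % (n-1), Nat.mod_lt _ hm⟩ _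
        (fun i hi => Finsupp.single_eq_of_ne' (Ne.symm hi))]
      rw [Finsupp.single_eq_same, pow_one]
      simp only [hv]
      rw [← hu]
      have hmod : (k-1) % (n-1) = k - 1 := Nat.mod_eq_of_lt (by omega)
      rw [hmod]
      congr 2
      omega
    have hM0 : (List.ofFn fun i => v i ^ (0 : Fin (n-1) →₀ ℕ) i).prod = 1 := by
      simp
    -- compute P.sum f
    have hfadd : ∀ (d : Fin (n-1) →₀ ℕ) (c₁ c₂ : ℚ), f d (c₁ + c₂) = f d c₁ + f d c₂ := by
      intro d c₁ c₂; simp only [hf]; rw [add_smul]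
    have hf0 : ∀ d : Fin (n-1) →₀ ℕ, f d 0 = 0 := by
      intro d; simp only [hf]; rw [zero_smul]
    show AdE G g = Finsupp.sum _ f
    rw [Finsupp.sum_add_index' hf0 hfadd, Finsupp.sum_add_index' hf0 hfadd]
    rw [Finsupp.sum_single_index (hf0 _), Finsupp.sum_single_index (hf0 _)]
    rw [← Finsupp.sum_finset_sum_index hf0 hfadd]
    have hterm : ∀ t ∈ Finset.Ioo 0 (n-1),
        (Finsupp.single (E t + E (n-1-t) + E 1) (1/(2*(n:ℚ)))).sum f
          = (1/(2*(n:ℚ))) • ((L^t - R^t) * (L^(n-1-t) - R^(n-1-t)) * (L - R)) := by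
      intro t ht
      rw [Finset.mem_Ioo] at ht
      rw [Finsupp.sum_single_index (hf0 _)]
      simp only [hf]
      rw [hMadd, hMadd, hME t (by omega) (by omega), hME (n-1-t) (by omega) (by omega),
        hME 1 (by omega) (by omega), pow_one, pow_one]
    rw [Finset.sum_congr rfl hterm]
    have h1 : f 0 1 = 1 := by
      simp only [hf]; rw [hM0, one_smul]
    have hD : f (E 1 + E (n-1)) (-(1/2) : ℚ)
        = -((1/2 : ℚ) • ((L - R) * (L^(n-1) - R^(n-1)))) := by
      simp only [hf]
      rw [hMadd, hME 1 (by omega) (by omega), hME (n-1) (by omega) (by omega), pow_one, pow_one]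
      module
    rw [h1, hD, ← Finset.smul_sum, hAd, main, sub_eq_add_neg]
end

section
/- Let G be a finite group and g ∈ G an element whose order n is odd or equal to 2. Then the conjugation operator Ad(g) on ℚG is a polynomial with rational coefficients in the single operator ad(g): x ↦ gx - xg, with the polynomial depending only on n. -/
open Polynomial

/-- Circle lemma: if `a + b = c + d` with all four of norm 1, then either the pairs coincide
or `a + b = 0`. -/
lemma circle_pairs {a b c d : ℂ} (ha : ‖a‖ = 1) (hb : ‖b‖ = 1) (hc : ‖c‖ = 1) (hd : ‖d‖ = 1)
    (h : a + b = c + d) : (a = c ∧ b = d) ∨ (a = d ∧ b = c) ∨ a + b = 0 := by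
  by_cases hs : a + b = 0
  · exact Or.inr (Or.inr hs)
  have ha0 : a ≠ 0 := by intro h0; rw [h0] at ha; simp at ha
  have hb0 : b ≠ 0 := by intro h0; rw [h0] at hb; simp at hb
  have hc0 : c ≠ 0 := by intro h0; rw [h0] at hc; simp at hc
  have hd0 : d ≠ 0 := by intro h0; rw [h0] at hd; simp at hd
  have hconj : a⁻¹ + b⁻¹ = c⁻¹ + d⁻¹ := by
    rw [Complex.inv_eq_conj ha, Complex.inv_eq_conj hb, Complex.inv_eq_conj hc,
      Complex.inv_eq_conj hd, ← map_add, ← map_add, h]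
  have hprod : a * b = c * d := by
    have h1 : (a + b) * (c * d) = (c + d) * (a * b) := by
      field_simp at hconj
      linear_combination hconj
    rw [← h] at h1
    exact (mul_left_cancel₀ hs h1).symm
  have hquad : (a - c) * (a - d) = 0 := by
    linear_combination a * h - hprod
  rcases mul_eq_zero.mp hquad with h1 | h1
  · left
    refine ⟨sub_eq_zero.mp h1, ?_⟩
    have := h
    rw [sub_eq_zero.mp h1] at this
    exact add_left_cancel this
  · right; left
    refine ⟨sub_eq_zero.mp h1, ?_⟩
    have := h
    rw [sub_eq_zero.mp h1, add_comm c d] at this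
    exact add_left_cancel this

/-- Injectivity of `ζ ↦ (ζ - 1)^n` on `n`-th roots of unity in `ℂ`, for `n` odd or `n = 2`. -/
lemma key_inj (n : ℕ) (hn : Odd n ∨ n = 2) {ζ η : ℂ} (hζ : ζ ^ n = 1) (hη : η ^ n = 1)
    (h : (ζ - 1) ^ n = (η - 1) ^ n) : ζ = η := by
  have hn0 : n ≠ 0 := by
    rcases hn with h1 | h1
    · exact h1.pos.ne'
    · omega
  by_cases hζ1 : ζ = 1
  · subst hζ1
    have : (η - 1) ^ n = 0 := by rw [← h]; simp [hn0]
    have := pow_eq_zero_iff hn0 |>.mp this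
    have : η = 1 := by linear_combination this
    exact this.symm
  by_cases hη1 : η = 1
  · subst hη1
    have : (ζ - 1) ^ n = 0 := by rw [h]; simp [hn0]
    have := pow_eq_zero_iff hn0 |>.mp this
    exact absurd (by linear_combination this) hζ1
  rcases hn with hodd | h2
  · -- odd case
    have hη1' : η - 1 ≠ 0 := sub_ne_zero.mpr hη1
    set ω : ℂ := (ζ - 1) / (η - 1) with hωdef
    have hω : ω ^ n = 1 := by
      rw [hωdef, div_pow, h, div_self (pow_ne_zero _ hη1')]
    have hmul : ω * (η - 1) = ζ - 1 := div_mul_cancel₀ _ hη1'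
    have hkey : ζ + ω = ω * η + 1 := by linear_combination -hmul
    have hωη : (ω * η) ^ n = 1 := by rw [mul_pow, hω, hη, one_mul]
    have nζ := Complex.norm_eq_one_of_pow_eq_one hζ hn0
    have nω := Complex.norm_eq_one_of_pow_eq_one hω hn0
    have nωη := Complex.norm_eq_one_of_pow_eq_one hωη hn0
    rcases circle_pairs nζ nω nωη (norm_one) hkey with ⟨h1, h2⟩ | ⟨h1, _⟩ | h1
    · rw [h2, one_mul] at h1; exact h1
    · exact absurd h1 hζ1
    · exfalso
      have hζω : ζ = -ω := eq_neg_of_add_eq_zero_left h1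
      rw [hζω, hodd.neg_pow, hω] at hζ
      norm_num at hζ
  · -- n = 2
    subst h2
    have hfζ : (ζ - 1) * (ζ + 1) = 0 := by linear_combination hζ
    have hfη : (η - 1) * (η + 1) = 0 := by linear_combination hη
    have hζ' : ζ = -1 := by
      rcases mul_eq_zero.mp hfζ with h1 | h1
      · exact absurd (by linear_combination h1) hζ1
      · linear_combination h1
    have hη' : η = -1 := by
      rcases mul_eq_zero.mp hfη with h1 | h1
      · exact absurd (by linear_combination h1) hη1
      · linear_combination h1
    rw [hζ', hη']

/-- The key polynomial lemma: for `n` odd or `n = 2`, there is `Q ∈ ℚ[X]` with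
`X^n - 1 ∣ Q.comp ((X-1)^n) - X`. -/
lemma keyQ (n : ℕ) (hn : Odd n ∨ n = 2) :
    ∃ Q : Polynomial ℚ, (X ^ n - 1 : Polynomial ℚ) ∣ (Q.comp ((X - 1) ^ n) - X) := by
  have hn0 : n ≠ 0 := by
    rcases hn with h1 | h1
    · exact h1.pos.ne'
    · omega
  have hnpos : 0 < n := Nat.pos_of_ne_zero hn0
  set f : Polynomial ℚ := X ^ n - 1 with hf
  have hfC : f = X ^ n - C 1 := by rw [hf, map_one]
  have hf0 : f ≠ 0 := by rw [hfC]; exact X_pow_sub_C_ne_zero hnpos 1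
  set u : AdjoinRoot f := (AdjoinRoot.root f - 1) ^ n with hu
  have humk : u = AdjoinRoot.mk f ((X - 1) ^ n) := by
    rw [hu]; simp [map_pow, map_sub, map_one]
  set φ : (degreeLT ℚ n : Submodule ℚ (Polynomial ℚ)) →ₗ[ℚ] AdjoinRoot f :=
    (aeval u).toLinearMap ∘ₗ (degreeLT ℚ n).subtype with hφ
  have hu2 : u = aeval (AdjoinRoot.root f) ((X - 1 : Polynomial ℚ) ^ n) := by
    rw [hu]; simp [map_pow, map_sub, map_one]
  have hφ_apply : ∀ p : (degreeLT ℚ n : Submodule ℚ (Polynomial ℚ)),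
      φ p = AdjoinRoot.mk f ((p : Polynomial ℚ).comp ((X - 1) ^ n)) := by
    intro p
    rw [hφ]
    simp only [LinearMap.comp_apply, Submodule.subtype_apply, AlgHom.toLinearMap_apply]
    rw [hu2, ← aeval_comp, AdjoinRoot.aeval_eq]
  haveI : FiniteDimensional ℚ (degreeLT ℚ n : Submodule ℚ (Polynomial ℚ)) :=
    Module.Finite.equiv (degreeLTEquiv ℚ n).symm
  haveI : FiniteDimensional ℚ (AdjoinRoot f) := (AdjoinRoot.powerBasis hf0).finite
  have hrank : Module.finrank ℚ (degreeLT ℚ n : Submodule ℚ (Polynomial ℚ)) =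
      Module.finrank ℚ (AdjoinRoot f) := by
    rw [(degreeLTEquiv ℚ n).finrank_eq, Module.finrank_fin_fun,
      (AdjoinRoot.powerBasis hf0).finrank, AdjoinRoot.powerBasis_dim, hfC,
      natDegree_X_pow_sub_C]
  have hinj : Function.Injective φ := by
    rw [injective_iff_map_eq_zero]
    rintro ⟨Q, hQmem⟩ hQ0
    rw [hφ_apply] at hQ0
    simp only at hQ0
    have hdvd : f ∣ Q.comp ((X - 1) ^ n) := AdjoinRoot.mk_eq_zero.mp hQ0
    ext1
    simp only [Submodule.coe_zero]
    by_contra hQne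
    -- map to ℂ
    set ι := algebraMap ℚ ℂ with hι
    set Qc : Polynomial ℂ := Q.map ι with hQc
    have hQcne : Qc ≠ 0 := Polynomial.map_ne_zero hQne
    have hdvdC : (X ^ n - 1 : Polynomial ℂ) ∣ Qc.comp ((X - 1) ^ n) := by
      have h1 := Polynomial.map_dvd ι hdvd
      rw [Polynomial.map_sub, Polynomial.map_pow, Polynomial.map_one, Polynomial.map_X,
        Polynomial.map_comp, Polynomial.map_pow, Polynomial.map_sub, Polynomial.map_one,
        Polynomial.map_X] at h1
      exact h1
    have hroots : ∀ ζ ∈ nthRootsFinset n (1 : ℂ), Qc.eval ((ζ - 1) ^ n) = 0 := by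
      intro ζ hζ
      have hζn : ζ ^ n = 1 := (mem_nthRootsFinset hnpos 1).mp hζ
      obtain ⟨H, hH⟩ := hdvdC
      have := congrArg (Polynomial.eval ζ) hH
      rw [eval_comp] at this
      simpa [hζn] using this
    classical
    set S : Finset ℂ := (nthRootsFinset n (1 : ℂ)).image (fun ζ => (ζ - 1) ^ n) with hS
    have hScard : S.card = n := by
      rw [hS, Finset.card_image_of_injOn, IsPrimitiveRoot.card_nthRootsFinset
        (Complex.isPrimitiveRoot_exp n hn0)]
      intro x hx y hy hxy
      exact key_inj n hn ((mem_nthRootsFinset hnpos 1).mp hx)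
        ((mem_nthRootsFinset hnpos 1).mp hy) hxy
    have hSsub : S ⊆ Qc.roots.toFinset := by
      intro x hx
      rw [hS, Finset.mem_image] at hx
      obtain ⟨ζ, hζ, rfl⟩ := hx
      rw [Multiset.mem_toFinset, mem_roots hQcne]
      exact hroots ζ hζ
    have hdeg : Qc.natDegree < n := by
      rw [Polynomial.natDegree_map_eq_of_injective (algebraMap ℚ ℂ).injective]
      exact (natDegree_lt_iff_degree_lt hQne).mpr (mem_degreeLT.mp hQmem)
    have : n ≤ Qc.natDegree := by
      calc n = S.card := hScard.symm
        _ ≤ Qc.roots.toFinset.card := Finset.card_le_card hSsub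
        _ ≤ Multiset.card Qc.roots := Multiset.toFinset_card_le _
        _ ≤ Qc.natDegree := Polynomial.card_roots' Qc
    omega
  have hsurj : Function.Surjective φ :=
    (LinearMap.injective_iff_surjective_of_finrank_eq_finrank hrank).mp hinj
  obtain ⟨⟨Q, hQmem⟩, hQ⟩ := hsurj (AdjoinRoot.root f)
  refine ⟨Q, ?_⟩
  rw [← AdjoinRoot.mk_eq_zero (f := f)]
  rw [hφ_apply] at hQ
  simp only at hQ
  rw [map_sub, hQ, AdjoinRoot.mk_X, sub_self]

theorem stmt_15 (n : ℕ) (hn : Odd n ∨ n = 2) :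
    ∃ P : Polynomial ℚ,
      ∀ (G : Type) [Group G] [Finite G] (g : G), orderOf g = n →
        AdE G g = Polynomial.aeval (adE G g) P := by
  obtain ⟨Q, hQdvd⟩ := keyQ n hn
  refine ⟨Q.comp (X ^ n), ?_⟩
  intro G _ _ g hg
  set a : MonoidAlgebra ℚ G := MonoidAlgebra.of ℚ G g with ha
  set b : MonoidAlgebra ℚ G := MonoidAlgebra.of ℚ G g⁻¹ with hb
  have hgn : g ^ n = 1 := hg ▸ pow_orderOf_eq_one g
  have han : a ^ n = 1 := by rw [ha, ← map_pow, hgn, map_one]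
  have hbn : b ^ n = 1 := by rw [hb, ← map_pow, inv_pow, hgn, inv_one, map_one]
  have hab : a * b = 1 := by rw [ha, hb, ← map_mul, mul_inv_cancel, map_one]
  have hba : b * a = 1 := by rw [ha, hb, ← map_mul, inv_mul_cancel, map_one]
  set L : Module.End ℚ (MonoidAlgebra ℚ G) := LinearMap.mulLeft ℚ a with hL
  set R : Module.End ℚ (MonoidAlgebra ℚ G) := LinearMap.mulRight ℚ a with hR
  set R' : Module.End ℚ (MonoidAlgebra ℚ G) := LinearMap.mulRight ℚ b with hR'
  have hAd : AdE G g = L * R' := rfl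
  have had : adE G g = L - R := rfl
  have hcommLR' : Commute L R' := LinearMap.commute_mulLeft_right a b
  have hcommLR : Commute L R := LinearMap.commute_mulLeft_right a a
  have hcommR'R : Commute R' R := by
    show R' * R = R * R'
    ext x
    simp [hR, hR', Module.End.mul_apply, mul_assoc, hab, hba]
  have hR'R : R' * R = 1 := by
    ext x
    simp [hR, hR', Module.End.mul_apply, mul_assoc, hab]
  have hAdn : (AdE G g) ^ n = 1 := by
    rw [hAd, hcommLR'.mul_pow, hL, hR', LinearMap.pow_mulLeft, LinearMap.pow_mulRight,
      han, hbn, LinearMap.mulLeft_one, LinearMap.mulRight_one]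
    exact one_mul _
  have hRn : R ^ n = 1 := by
    rw [hR, LinearMap.pow_mulRight, han, LinearMap.mulRight_one]
    exact Module.End.one_eq_id.symm
  have hadR : adE G g = (AdE G g - 1) * R := by
    rw [had, hAd, sub_mul, one_mul, mul_assoc, hR'R, mul_one]
  have hcomm2 : Commute (AdE G g - 1) R := by
    rw [hAd]
    exact ((hcommLR.mul_left hcommR'R)).sub_left (Commute.one_left R)
  have hadn : (adE G g) ^ n = (AdE G g - 1) ^ n := by
    rw [hadR, hcomm2.mul_pow, hRn, mul_one]
  obtain ⟨H, hH⟩ := hQdvd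
  have e1 : Polynomial.aeval (AdE G g) (Q.comp ((X - 1) ^ n) - X) = 0 := by
    rw [hH, map_mul, map_sub, map_pow, aeval_X, map_one, hAdn, sub_self, zero_mul]
  rw [map_sub, aeval_X, sub_eq_zero, comp_eq_aeval,
    ← aeval_algHom_apply (Polynomial.aeval (AdE G g))] at e1
  have e3 : Polynomial.aeval (AdE G g) ((X - 1) ^ n : Polynomial ℚ) = (AdE G g - 1) ^ n := by
    rw [map_pow, map_sub, aeval_X, map_one]
  rw [e3] at e1
  rw [comp_eq_aeval, ← aeval_algHom_apply (Polynomial.aeval (adE G g)), map_pow, aeval_X,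
    hadn, e1]
end

section
/- Let G be a finite group and g ∈ G of order 3. Then in End(ℚG) one has 18·Ad(g) = 18·Id + 3·ad(g)³ + ad(g)⁶, where Ad(g)(x) = gxg^(-1) and ad(g)(x) = gx - xg. -/
/-- The key commutative-ring identity. -/
lemma aux_comm {A : Type*} [Ring A] [Algebra ℚ A] {l r : A} (hc : l * r = r * l)
    (hl : l ^ 3 = 1) (hr : r ^ 3 = 1) :
    (18 : ℚ) • (l * r ^ 2) =
      (18 : ℚ) • (1 : A) + (3 : ℚ) • (l - r) ^ 3 + (l - r) ^ 6 := by
  set s : Set A := {l, r} with hs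
  have hcomm : ∀ a ∈ s, ∀ b ∈ s, a * b = b * a := by
    rintro a (rfl | rfl) b (rfl | rfl)
    · rfl
    · exact hc
    · exact hc.symm
    · rfl
  letI : CommRing (Algebra.adjoin ℚ s) := Algebra.adjoinCommRingOfComm ℚ hcomm
  set L : Algebra.adjoin ℚ s := ⟨l, Algebra.subset_adjoin (by simp [hs])⟩ with hLdef
  set R : Algebra.adjoin ℚ s := ⟨r, Algebra.subset_adjoin (by simp [hs])⟩ with hRdef
  have hL : L ^ 3 = 1 := Subtype.ext (by simpa using hl)
  have hR : R ^ 3 = 1 := Subtype.ext (by simpa using hr)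
  have key : (18 : ℚ) • (L * R ^ 2) =
      (18 : ℚ) • (1 : Algebra.adjoin ℚ s) + (3 : ℚ) • (L - R) ^ 3 + (L - R) ^ 6 := by
    simp only [Algebra.smul_def, map_ofNat]
    linear_combination (-4 - L ^ 3 + 20 * R ^ 3 + 6 * L ^ 2 * R - 15 * L * R ^ 2) * hL +
      (22 - R ^ 3 + 6 * L * R ^ 2 - 15 * L ^ 2 * R) * hR
  have := congrArg (Subalgebra.val (Algebra.adjoin ℚ s)) key
  simpa [map_add, map_smul, map_pow, map_sub, map_one, map_mul] using this

theorem stmt_17 (G : Type*) [Group G] [Finite G] (g : G) (hg : orderOf g = 3) :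
    (18 : ℚ) • AdE G g =
      (18 : ℚ) • (1 : Module.End ℚ (MonoidAlgebra ℚ G)) +
        (3 : ℚ) • (adE G g) ^ 3 + (adE G g) ^ 6 := by
  have hg3 : g ^ 3 = 1 := by rw [← hg]; exact pow_orderOf_eq_one g
  have hginv : g⁻¹ = g ^ 2 := by
    rw [eq_comm, eq_inv_iff_mul_eq_one, ← pow_succ, hg3]
  set l : Module.End ℚ (MonoidAlgebra ℚ G) := LinearMap.mulLeft ℚ (MonoidAlgebra.of ℚ G g)
    with hl_def
  set r : Module.End ℚ (MonoidAlgebra ℚ G) := LinearMap.mulRight ℚ (MonoidAlgebra.of ℚ G g)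
    with hr_def
  have hc : l * r = r * l := (LinearMap.commute_mulLeft_right _ _).eq
  have hl : l ^ 3 = 1 := by
    rw [hl_def, LinearMap.pow_mulLeft, ← map_pow, hg3, map_one, LinearMap.mulLeft_one,
      Module.End.one_eq_id]
  have hr : r ^ 3 = 1 := by
    rw [hr_def, LinearMap.pow_mulRight, ← map_pow, hg3, map_one, LinearMap.mulRight_one,
      Module.End.one_eq_id]
  have hAd : AdE G g = l * r ^ 2 := by
    rw [AdE, hginv, map_pow, ← LinearMap.pow_mulRight, ← Module.End.mul_eq_comp, ← hl_def, ← hr_def]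
  have had : adE G g = l - r := rfl
  rw [hAd, had]
  exact aux_comm hc hl hr
end
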